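/- arXiv:2201.08376 — 9 statements merged into one kernel-verified Lean document; each statement's English description precedes it below -/
import Mathlib

section
/- Let q be an odd prime power, let k be a positive integer (k ≠ 0), and let f(x) = a·x^{p^k+1} + d·x^{p^k} + b·x + c ∈ F_q[x], where p is the characteristic of F_q. If f(x) = g(x)^2 for some polynomial g ∈ F_q[x], then either (d^{p^k}·a = b·a^{p^k} and d^{p^k+1}·a = c·a^{p^k+1}) or a = b = d = 0. -/
/-!
Since `p ^ k = 0` in `F`, the derivative of `f = g ^ 2` is `a X ^ p^k + b = a (X + e) ^ p^k`, where
`e ^ p^k = b / a` exists because Frobenius is bijective on a finite field; and `g` divides this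
derivative. Hence `g`, and with it `f`, is a constant times a power of the prime `X + e`, and
comparing degrees and leading coefficients gives `f = a (X + e) ^ (p^k + 1)`, i.e.
`d = a e`, `b = a e ^ p^k`, `c = a e ^ (p^k + 1)`. If `a = 0`, then `f` has odd degree `p^k` or `1`
unless `b = d = 0`, so it cannot be a square.
-/

open Polynomial

namespace Polynomial

section CommRing

variable {R : Type*} [CommRing R]

noncomputable def quadrinomial (N : ℕ) (a d b c : R) : R[X] :=
  C a * X ^ (N + 1) + C d * X ^ N + C b * X + C c

variable {N : ℕ} {a d b c : R}

theorem derivative_quadrinomial (hN : (N : R) = 0) :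
    derivative (quadrinomial N a d b c) = C a * X ^ N + C b := by
  simp [quadrinomial, derivative_X_pow, hN]

theorem natDegree_quadrinomial [Nontrivial R] [NoZeroDivisors R] (hN : 1 < N) (ha : a ≠ 0) :
    (quadrinomial N a d b c).natDegree = N + 1 := by
  unfold quadrinomial
  compute_degree!
  simpa [show N ≠ 0 by omega] using ha

theorem leadingCoeff_quadrinomial [Nontrivial R] [NoZeroDivisors R] (hN : 1 < N) (ha : a ≠ 0) :
    (quadrinomial N a d b c).leadingCoeff = a := by
  rw [leadingCoeff, natDegree_quadrinomial hN ha]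
  simp [quadrinomial, coeff_C]
  omega

theorem quadrinomial_inj {a' d' b' c' : R} (hN : 1 < N) :
    quadrinomial N a d b c = quadrinomial N a' d' b' c' ↔ a = a' ∧ d = d' ∧ b = b' ∧ c = c' := by
  refine ⟨fun h => ?_, by rintro ⟨rfl, rfl, rfl, rfl⟩; rfl⟩
  have hcoeff (n : ℕ) := congrArg (coeff · n) h
  have hN1 := hcoeff (N + 1)
  have hN0 := hcoeff N
  have h1 := hcoeff 1
  have h0 := hcoeff 0
  simp [quadrinomial, coeff_X, coeff_C, show N ≠ 0 by omega, show 1 ≠ N by omega,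
    show 0 ≠ N by omega] at hN1 hN0 h1 h0
  exact ⟨hN1, hN0, h1, h0⟩

theorem odd_natDegree_quadrinomial_zero (hN : Odd N) (hN1 : 1 < N) (hdb : d ≠ 0 ∨ b ≠ 0) :
    Odd (quadrinomial N 0 d b c).natDegree := by
  simp only [quadrinomial, map_zero, zero_mul, zero_add]
  rcases eq_or_ne d 0 with rfl | hd
  · have hb : b ≠ 0 := by simpa using hdb
    have : (C 0 * X ^ N + C b * X + C c).natDegree = 1 := by
      simp only [map_zero, zero_mul, zero_add]
      compute_degree!
    rw [this]
    exact odd_one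
  · have : (C d * X ^ N + C b * X + C c).natDegree = N := by
      compute_degree!
      all_goals simp_all [show N ≠ 0 by omega, show N ≠ 1 by omega]
      all_goals omega
    rw [this]
    exact hN

theorem C_mul_X_add_C_pow_char_pow_succ (p : ℕ) [Fact p.Prime] [CharP R p] (k : ℕ) (a e : R) :
    C a * (X + C e) ^ (p ^ k + 1) =
      quadrinomial (p ^ k) a (a * e) (a * e ^ p ^ k) (a * e ^ (p ^ k + 1)) := by
  rw [pow_succ, add_pow_char_pow, quadrinomial]
  generalize p ^ k = N
  simp only [map_mul, map_pow]
  ring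

end CommRing

theorem eq_C_leadingCoeff_mul_X_add_C_pow_of_dvd {F : Type*} [Field F] {g : F[X]} {e : F}
    {n : ℕ} (h : g ∣ (X + C e) ^ n) : g = C g.leadingCoeff * (X + C e) ^ g.natDegree := by
  have hprime : Prime (X + C e) := by simpa using prime_X_sub_C (-e)
  obtain ⟨m, -, hm⟩ := (dvd_prime_pow hprime n).mp h
  obtain ⟨u, rfl⟩ := hm.symm
  obtain ⟨r, hr, hru⟩ := Polynomial.isUnit_iff.mp u.isUnit
  rw [← hru, leadingCoeff_mul, leadingCoeff_pow, leadingCoeff_X_add_C, leadingCoeff_C, one_pow,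
    one_mul, natDegree_mul (pow_ne_zero _ (X_add_C_ne_zero e)) (C_ne_zero.mpr hr.ne_zero),
    natDegree_C, add_zero, natDegree_pow, natDegree_X_add_C, mul_one, mul_comm]

theorem dvd_derivative_sq {R : Type*} [CommRing R] (g : R[X]) : g ∣ derivative (g ^ 2) :=
  ⟨C 2 * derivative g, by rw [derivative_sq]; ring⟩

theorem exists_eq_of_quadrinomial_eq_sq {F : Type*} [Field F] (p : ℕ) [Fact p.Prime] [CharP F p]
    [PerfectRing F p] {k : ℕ} (hk : k ≠ 0) {a d b c : F} (ha : a ≠ 0) {g : F[X]}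
    (hf : quadrinomial (p ^ k) a d b c = g ^ 2) :
    ∃ e, d = a * e ∧ b = a * e ^ p ^ k ∧ c = a * e ^ (p ^ k + 1) := by
  have hN : 1 < p ^ k := Nat.one_lt_pow hk (Fact.out : p.Prime).one_lt
  obtain ⟨e, he⟩ := (bijective_iterateFrobenius F p k).surjective (b / a)
  rw [iterateFrobenius_def] at he
  have hderiv : derivative (g ^ 2) = C a * (X + C e) ^ p ^ k := by
    rw [← hf, derivative_quadrinomial (by simp [hk]), add_pow_char_pow, mul_add, ← C_pow, ← C_mul,
      he, mul_div_cancel₀ _ ha]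
  have hdvd : g ^ 2 ∣ (X + C e) ^ (2 * p ^ k) := by
    rw [pow_mul']
    refine pow_dvd_pow_of_dvd ?_ 2
    have hg := dvd_derivative_sq g
    rwa [hderiv, (isUnit_C.mpr (isUnit_iff_ne_zero.mpr ha)).dvd_mul_left] at hg
  have hpow := eq_C_leadingCoeff_mul_X_add_C_pow_of_dvd hdvd
  rw [← hf, leadingCoeff_quadrinomial hN ha, natDegree_quadrinomial hN ha,
    C_mul_X_add_C_pow_char_pow_succ, quadrinomial_inj hN] at hpow
  exact ⟨e, hpow.2⟩

end Polynomial

/-- If `q` is odd and `f(x) = a x^{p^k+1} + d x^{p^k} + b x + c ∈ F_q[x]` (`k ≠ 0`, `p` the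
characteristic) is the square of a polynomial, then `d^{p^k} a = b a^{p^k}` and
`d^{p^k+1} a = c a^{p^k+1}`, or `a = b = d = 0`. -/
theorem stmt1 (F : Type*) [Field F] [Fintype F] (p : ℕ) [Fact p.Prime] [CharP F p]
    (hodd : Odd (Fintype.card F)) (k : ℕ) (hk : k ≠ 0) (a b c d : F) (g : Polynomial F)
    (hf : C a * X ^ (p ^ k + 1) + C d * X ^ (p ^ k) + C b * X + C c = g ^ 2) :
    (d ^ (p ^ k) * a = b * a ^ (p ^ k) ∧ d ^ (p ^ k + 1) * a = c * a ^ (p ^ k + 1)) ∨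
      (a = 0 ∧ b = 0 ∧ d = 0) := by
  change quadrinomial (p ^ k) a d b c = g ^ 2 at hf
  by_cases ha : a = 0
  · subst ha
    refine Or.inr ⟨rfl, ?_⟩
    by_contra hbd
    have hp : Odd p := hodd.of_dvd_nat <|
      (prime_dvd_char_iff_dvd_card p).mp (ringChar.eq F p ▸ dvd_rfl)
    have hodd_deg := odd_natDegree_quadrinomial_zero (d := d) (b := b) (c := c) hp.pow
      (Nat.one_lt_pow hk (Fact.out : p.Prime).one_lt) (by tauto)
    rw [hf, natDegree_pow] at hodd_deg
    exact Nat.not_even_iff_odd.mpr hodd_deg (even_two_mul _)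
  · obtain ⟨e, rfl, rfl, rfl⟩ := exists_eq_of_quadrinomial_eq_sq p hk ha hf
    left
    constructor <;> ring
end

section
/- Let q > 9 be an odd prime power that is a square. Suppose D ⊆ F_q has size |D| > q − √q/2 + 1/2, and the function x ↦ ℓ(x) := a·x^{√q+1} + d·x^{√q} + b·x + c with a ≠ 0 has the property that ℓ(x) is a square in F_q for every x ∈ D. Then a^{√q}·b = d^{√q}·a. -/
/-!
Let `σ x = x ^ r` be the involution of `𝔽_q` over `𝔽_r`. Unless `a ^ r * b = d ^ r * a`, an affine
substitution `x = α w - e` turns `ℓ` into `A (w σ(w) + w) + u₀` with `A ≠ 0`. Two distinct points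
with the same value of `w σ(w) + w` differ by some `u ∈ 𝔽_r^×`, and the second one is a root of
`σ y + y + u + 1`, a polynomial of degree `r`; so there are at most `(r - 1) r` ordered collisions,
and `w ↦ w σ(w) + w`, hence `ℓ`, takes at least `(q + r) / 2` values. At most `(q + 1) / 2` of
them are squares, so `ℓ` is a non-square at `(r - 1) / 2` points or more: `|D| ≤ q - (r - 1) / 2`.
-/

open Finset Polynomial

theorem two_mul_card_le_card_image_add_card_collisions {α β : Type*} [DecidableEq α]
    [DecidableEq β] (s : Finset α) (f : α → β) :
    2 * #s ≤ 2 * #(s.image f) + #{p ∈ s.offDiag | f p.1 = f p.2} := by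
  rw [card_eq_sum_card_fiberwise fun x hx => mem_image_of_mem f hx,
    card_eq_sum_card_fiberwise (f := fun p => f p.1) (t := s.image f)
      fun p hp => mem_image_of_mem f (mem_offDiag.mp (mem_filter.mp hp).1).1,
    card_eq_sum_ones, mul_sum, mul_sum, ← sum_add_distrib]
  gcongr with v
  have hfiber : {p ∈ {p ∈ s.offDiag | f p.1 = f p.2} | f p.1 = v} = {a ∈ s | f a = v}.offDiag := by
    ext ⟨x, y⟩
    simp only [mem_filter, mem_offDiag]
    constructor
    · rintro ⟨⟨⟨hx, hy, hxy⟩, hf⟩, rfl⟩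
      exact ⟨⟨hx, rfl⟩, ⟨hy, hf.symm⟩, hxy⟩
    · rintro ⟨⟨hx, rfl⟩, ⟨hy, hf⟩, hxy⟩
      exact ⟨⟨⟨hx, hy, hxy⟩, hf.symm⟩, rfl⟩
  rw [hfiber, offDiag_card]
  rcases #{a ∈ s | f a = v} with _ | n
  · simp
  · have h := Nat.le_mul_self n
    zify [Nat.le_mul_self (n + 1)] at h ⊢
    nlinarith

theorem card_image_le_card_image_of_semiconj {α β γ δ : Type*} [Fintype α] [Fintype γ]
    [DecidableEq β] [DecidableEq δ] {f : α → β} {g : γ → δ} {ψ : β → δ} {φ : α → γ}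
    (hψ : Function.Injective ψ) (h : ∀ w, ψ (f w) = g (φ w)) :
    #(univ.image f) ≤ #(univ.image g) := by
  rw [← card_image_of_injective _ hψ, image_image]
  refine card_le_card fun v hv => ?_
  obtain ⟨w, -, rfl⟩ := mem_image.mp hv
  exact mem_image.mpr ⟨φ w, mem_univ _, (h w).symm⟩

theorem card_image_le_card_filter_not_add_card_filter {α β : Type*} [Fintype α] [Fintype β]
    [DecidableEq β] (f : α → β) (P : β → Prop) [DecidablePred P] :
    #(univ.image f) ≤ #{x | ¬P (f x)} + #{y | P y} := by
  calc #(univ.image f) ≤ #(({x | ¬P (f x)} : Finset α).image f ∪ ({y | P y} : Finset β)) := by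
        refine card_le_card fun v hv => ?_
        obtain ⟨x, -, rfl⟩ := mem_image.mp hv
        by_cases hx : P (f x)
        · exact mem_union_right _ (mem_filter.mpr ⟨mem_univ _, hx⟩)
        · exact mem_union_left _ (mem_image_of_mem f (mem_filter.mpr ⟨mem_univ _, hx⟩))
    _ ≤ #{x | ¬P (f x)} + #{y | P y} := (card_union_le _ _).trans (by gcongr; exact card_image_le)

theorem card_filter_pow_add_self_add_eq_zero_le {F : Type*} [Field F] [Fintype F] [DecidableEq F]
    {r : ℕ} (hr : 2 ≤ r) (c : F) : #{y : F | y ^ r + y + c = 0} ≤ r := by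
  have hmonic : (X ^ r + (X + C c) : F[X]).Monic := monic_X_pow_add (by compute_degree!)
  have hdeg : (X ^ r + (X + C c) : F[X]).natDegree = r := by
    compute_degree!
    · simp [show 1 ≠ r by omega, show r ≠ 0 by omega]
    · omega
  conv_rhs => rw [← hdeg]
  refine card_le_degree_of_subset_roots fun y hy => ?_
  rw [mem_roots hmonic.ne_zero]
  simp only [mem_val, mem_filter, mem_univ, true_and] at hy
  simp [← add_assoc, hy]

namespace FiniteField

theorem exists_ringHom_pow_involutive {F : Type*} [Field F] [Fintype F] {r : ℕ}
    (hcard : Fintype.card F = r ^ 2) :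
    ∃ σ : F →+* F, (∀ x, σ x = x ^ r) ∧ ∀ x, σ (σ x) = x := by
  obtain ⟨n, hp, hpn⟩ := FiniteField.card F (ringChar F)
  have : Fact (ringChar F).Prime := ⟨hp⟩
  have hdvd : r ∣ ringChar F ^ (n : ℕ) := hpn ▸ hcard ▸ dvd_pow_self r two_ne_zero
  obtain ⟨m, -, rfl⟩ := (Nat.dvd_prime_pow hp).mp hdvd
  refine ⟨iterateFrobenius F (ringChar F) m, fun x => rfl, fun x => ?_⟩
  rw [iterateFrobenius_def, iterateFrobenius_def, ← pow_mul, ← sq, ← hcard, FiniteField.pow_card]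

theorem two_mul_card_isSquare_le {F : Type*} [Field F] [Fintype F] [DecidableEq F]
    (hodd : Odd (Fintype.card F)) : 2 * #{z : F | IsSquare z} ≤ Fintype.card F + 1 := by
  have := Fintype.one_lt_card (α := F)
  have hchar : ringChar F ≠ 2 := fun h => by
    have := FiniteField.even_card_of_char_two h
    rw [Nat.odd_iff] at hodd
    omega
  have hsub : ({z : F | IsSquare z} : Finset F) ⊆
      insert 0 (nthRootsFinset (Fintype.card F / 2) (1 : F)) := by
    intro z hz
    rw [mem_filter] at hz
    rcases eq_or_ne z 0 with rfl | hz0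
    · exact mem_insert_self _ _
    · rw [mem_insert, mem_nthRootsFinset (by omega)]
      exact Or.inr ((FiniteField.isSquare_iff hchar hz0).mp hz.2)
  have hroots : #(nthRootsFinset (Fintype.card F / 2) (1 : F)) ≤ Fintype.card F / 2 := by
    rw [nthRootsFinset_def]
    exact (Multiset.toFinset_card_le _).trans (card_nthRoots _ _)
  have := (card_le_card hsub).trans (card_insert_le _ _)
  rw [Nat.odd_iff] at hodd
  omega

end FiniteField

section Conjugation

variable {F : Type*} [Field F] (σ : F →+* F)

def normAddSelf (w : F) : F := w * σ w + w

variable {σ}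

theorem map_eq_self_of_normAddSelf_add_eq (hσ : ∀ x, σ (σ x) = x) {y u : F}
    (h : normAddSelf σ (y + u) = normAddSelf σ y) : σ u = u := by
  have hE : y * σ u + u * σ y + u * σ u + u = 0 := by
    simp only [normAddSelf, map_add] at h
    linear_combination h
  have hE' := congrArg σ hE
  simp only [map_add, map_mul, hσ, map_zero] at hE'
  linear_combination hE' - hE

theorem map_add_self_add_eq_zero_of_normAddSelf_add_eq (hσ : ∀ x, σ (σ x) = x) {y u : F}
    (hu : u ≠ 0) (h : normAddSelf σ (y + u) = normAddSelf σ y) : σ y + y + (u + 1) = 0 := by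
  have hfix := map_eq_self_of_normAddSelf_add_eq hσ h
  refine (mul_eq_zero.mp ?_).resolve_left hu
  simp only [normAddSelf, map_add] at h
  linear_combination h - (y + u) * hfix

theorem card_collisions_normAddSelf_le [Fintype F] [DecidableEq F] {r : ℕ} (hr : 2 ≤ r)
    (hσ : ∀ x, σ (σ x) = x) (hσr : ∀ x, σ x = x ^ r) :
    #{p ∈ (univ : Finset F).offDiag | normAddSelf σ p.1 = normAddSelf σ p.2} ≤ (r - 1) * r := by
  set S := {p ∈ (univ : Finset F).offDiag | normAddSelf σ p.1 = normAddSelf σ p.2}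
  have hcoll : ∀ p ∈ S, p.1 - p.2 ≠ 0 ∧ normAddSelf σ (p.2 + (p.1 - p.2)) = normAddSelf σ p.2 := by
    intro p hp
    simp only [S, mem_filter, mem_offDiag] at hp
    exact ⟨sub_ne_zero.mpr hp.1.2.2, by rw [add_sub_cancel, hp.2]⟩
  have hmaps : ∀ p ∈ S, p.1 - p.2 ∈ nthRootsFinset (r - 1) (1 : F) := by
    intro p hp
    obtain ⟨hu, h⟩ := hcoll p hp
    have hfix := map_eq_self_of_normAddSelf_add_eq hσ h
    rw [hσr] at hfix
    rw [mem_nthRootsFinset (by omega)]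
    refine mul_right_cancel₀ hu ?_
    rw [← pow_succ, Nat.sub_add_cancel (by omega), hfix, one_mul]
  have hfiber : ∀ u ∈ nthRootsFinset (r - 1) (1 : F), #{p ∈ S | p.1 - p.2 = u} ≤ r := by
    intro u _
    refine le_trans (card_le_card_of_injOn Prod.snd (fun p hp => ?_) fun p hp p' hp' h => ?_)
      (card_filter_pow_add_self_add_eq_zero_le hr (u + 1))
    · rw [mem_coe, mem_filter] at hp
      obtain ⟨hu, h⟩ := hcoll p hp.1
      rw [hp.2] at hu h
      simpa [hσr] using map_add_self_add_eq_zero_of_normAddSelf_add_eq hσ hu h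
    · rw [mem_coe, mem_filter] at hp hp'
      exact Prod.ext (by linear_combination hp.2 - hp'.2 + h) h
  have hroots : #(nthRootsFinset (r - 1) (1 : F)) ≤ r - 1 := by
    rw [nthRootsFinset_def]
    exact (Multiset.toFinset_card_le _).trans (card_nthRoots _ _)
  calc #S ≤ r * #(nthRootsFinset (r - 1) (1 : F)) :=
        card_le_mul_card_image_of_maps_to hmaps r hfiber
    _ ≤ (r - 1) * r := by rw [mul_comm]; gcongr

theorem card_add_le_two_mul_card_image_normAddSelf [Fintype F] [DecidableEq F] {r : ℕ}
    (hcard : Fintype.card F = r ^ 2) (hσ : ∀ x, σ (σ x) = x) (hσr : ∀ x, σ x = x ^ r) :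
    Fintype.card F + r ≤ 2 * #(univ.image (normAddSelf σ)) := by
  have hr : 2 ≤ r := by
    have := Fintype.one_lt_card (α := F)
    nlinarith
  have h := two_mul_card_le_card_image_add_card_collisions univ (normAddSelf σ)
  have hT := card_collisions_normAddSelf_le hr hσ hσr
  rw [card_univ] at h
  rw [hcard] at h ⊢
  zify [show 1 ≤ r by omega] at h hT ⊢
  nlinarith

theorem exists_normAddSelf_semiconj (hσ : ∀ x, σ (σ x) = x) {a b c d : F} (ha : a ≠ 0)
    (hne : σ a * b ≠ σ d * a) :
    ∃ A u₀ α e : F, A ≠ 0 ∧ ∀ w : F,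
      a * (α * w - e) * σ (α * w - e) + d * σ (α * w - e) + b * (α * w - e) + c =
        A * normAddSelf σ w + u₀ := by
  obtain ⟨e, he⟩ : ∃ e, a * e = d := ⟨d / a, mul_div_cancel₀ d ha⟩
  obtain ⟨γ, hγ⟩ : ∃ γ, a * γ = b - a * σ e := ⟨(b - a * σ e) / a, mul_div_cancel₀ _ ha⟩
  have hγ0 : γ ≠ 0 := by
    rintro rfl
    apply hne
    rw [← he, map_mul]
    linear_combination -σ a * hγ
  refine ⟨a * γ * σ γ, a * e * σ e - d * σ e - b * e + c, σ γ, e,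
    mul_ne_zero (mul_ne_zero ha hγ0) ((map_ne_zero σ).mpr hγ0), fun w => ?_⟩
  simp only [normAddSelf, map_sub, map_mul, hσ]
  linear_combination (-(γ * σ w)) * he - (σ γ * w) * hγ

end Conjugation

theorem stmt2_general (F : Type*) [Field F] [Fintype F] (r : ℕ)
    (hcard : Fintype.card F = r ^ 2) (hodd : Odd (Fintype.card F))
    (D : Finset F)
    (hD : (Fintype.card F : ℝ) - (r : ℝ) / 2 + 1 / 2 < (D.card : ℝ))
    (a b c d : F) (ha : a ≠ 0)
    (hsq : ∀ x ∈ D, IsSquare (a * x ^ (r + 1) + d * x ^ r + b * x + c)) :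
    a ^ r * b = d ^ r * a := by
  classical
  by_contra hne
  set ℓ : F → F := fun x => a * x ^ (r + 1) + d * x ^ r + b * x + c
  obtain ⟨σ, hσr, hσ⟩ := FiniteField.exists_ringHom_pow_involutive hcard
  obtain ⟨A, u₀, α, e, hA, hℓ⟩ :=
    exists_normAddSelf_semiconj hσ (c := c) ha (by simpa only [hσr] using hne)
  have himage : Fintype.card F + r ≤ 2 * #(univ.image ℓ) :=
    (card_add_le_two_mul_card_image_normAddSelf hcard hσ hσr).trans <| Nat.mul_le_mul_left 2 <|
      card_image_le_card_image_of_semiconj (ψ := fun v => A * v + u₀) (φ := fun w => α * w - e)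
        (fun v w h => mul_left_cancel₀ hA (add_right_cancel h)) fun w => by rw [← hℓ, hσr]; ring
  have hnonsq := card_image_le_card_filter_not_add_card_filter ℓ IsSquare
  have hsquares := FiniteField.two_mul_card_isSquare_le hodd
  have hdisj : #D + #{x | ¬IsSquare (ℓ x)} ≤ Fintype.card F := by
    have hdisjoint : Disjoint D ({x | ¬IsSquare (ℓ x)} : Finset F) :=
      disjoint_left.mpr fun x hx hx' => (mem_filter.mp hx').2 (hsq x hx)
    rw [← card_union_of_disjoint hdisjoint]
    exact card_le_univ _
  have hbound : 2 * #D + r ≤ 2 * Fintype.card F + 1 := by omega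
  have hbound' : (2 * #D + r : ℝ) ≤ 2 * Fintype.card F + 1 := by exact_mod_cast hbound
  linarith

/-- Let `q > 9` be an odd square prime power with `q = r^2`. If `D ⊆ F_q` has size
`|D| > q − √q/2 + 1/2` and `ℓ(x) = a x^{√q+1} + d x^{√q} + b x + c` (`a ≠ 0`) is a square
in `F_q` for every `x ∈ D`, then `a^{√q} b = d^{√q} a`. -/
theorem stmt2 (F : Type*) [Field F] [Fintype F] (r : ℕ)
    (hcard : Fintype.card F = r ^ 2) (hodd : Odd (Fintype.card F))
    (hq : 9 < Fintype.card F)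
    (D : Finset F)
    (hD : (Fintype.card F : ℝ) - (r : ℝ) / 2 + 1 / 2 < (D.card : ℝ))
    (a b c d : F) (ha : a ≠ 0)
    (hsq : ∀ x ∈ D, IsSquare (a * x ^ (r + 1) + d * x ^ r + b * x + c)) :
    a ^ r * b = d ^ r * a :=
  stmt2_general F r hcard hodd D hD a b c d ha hsq
end

section
/- Let t ≤ k < q and let U be a set of polynomials over F_q of degree at most k. If for any two f, g ∈ U there exist t distinct elements x_1, …, x_t ∈ F_q such that f(x_i) = g(x_i) for i = 1, …, t, then |U| ≤ q^{k+1−t}. -/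
/-! Two polynomials of degree at most `k` whose coefficients of `X ^ t, …, X ^ k` coincide
differ by a polynomial of degree less than `t`; if they also agree at `t` points, they are
equal. So `f ↦ (coeff f t, …, coeff f k)` is injective on `U`, and `U` has at most
`q ^ (k + 1 - t)` elements. -/

open Polynomial

namespace Polynomial

variable {R : Type*}

def highCoeffs [Semiring R] (t k : ℕ) (f : R[X]) : Fin (k + 1 - t) → R :=
  fun i => f.coeff (t + i)

theorem degree_sub_lt_of_highCoeffs_eq [Ring R] {t k : ℕ} {f g : R[X]}
    (hf : f.natDegree ≤ k) (hg : g.natDegree ≤ k) (h : highCoeffs t k f = highCoeffs t k g) :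
    (f - g).degree < t := by
  rw [degree_lt_iff_coeff_zero]
  intro m hm
  rw [coeff_sub, sub_eq_zero]
  by_cases hmk : m ≤ k
  · have := congrFun h ⟨m - t, by omega⟩
    simpa only [highCoeffs, Nat.add_sub_cancel' hm] using this
  · rw [coeff_eq_zero_of_natDegree_lt (by omega), coeff_eq_zero_of_natDegree_lt (by omega)]

theorem injOn_highCoeffs [CommRing R] [IsDomain R] {t k : ℕ} {U : Set R[X]}
    (hdeg : ∀ f ∈ U, f.natDegree ≤ k)
    (hint : ∀ f ∈ U, ∀ g ∈ U, ∃ s : Finset R, s.card = t ∧ ∀ x ∈ s, f.eval x = g.eval x) :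
    U.InjOn (highCoeffs t k) := by
  intro f hf g hg hfg
  obtain ⟨s, rfl, heval⟩ := hint f hf g hg
  exact eq_of_degree_sub_lt_of_eval_finset_eq s
    (degree_sub_lt_of_highCoeffs_eq (hdeg f hf) (hdeg g hg) hfg) heval

end Polynomial

theorem stmt3_general (F : Type*) [Field F] [Fintype F] (t k : ℕ)
    (U : Finset (Polynomial F)) (hdeg : ∀ f ∈ U, f.natDegree ≤ k)
    (hint : ∀ f ∈ U, ∀ g ∈ U,
      ∃ s : Finset F, s.card = t ∧ ∀ x ∈ s, f.eval x = g.eval x) :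
    U.card ≤ Fintype.card F ^ (k + 1 - t) := by
  calc U.card ≤ (Finset.univ : Finset (Fin (k + 1 - t) → F)).card :=
        Finset.card_le_card_of_injOn (highCoeffs t k) (fun _ _ => Finset.mem_univ _)
          (injOn_highCoeffs hdeg hint)
    _ = Fintype.card F ^ (k + 1 - t) := by
        rw [Finset.card_univ, Fintype.card_fun, Fintype.card_fin]

/-- Let `t ≤ k < q` and let `U` be a set of polynomials over `F_q` of degree at most `k`.
If for any two `f, g ∈ U` there exist `t` distinct elements of `F_q` on which `f` and `g`
agree, then `|U| ≤ q^{k+1−t}`. -/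
theorem stmt3 (F : Type*) [Field F] [Fintype F] (t k : ℕ)
    (htk : t ≤ k) (hkq : k < Fintype.card F)
    (U : Finset (Polynomial F)) (hdeg : ∀ f ∈ U, f.natDegree ≤ k)
    (hint : ∀ f ∈ U, ∀ g ∈ U,
      ∃ s : Finset F, s.card = t ∧ ∀ x ∈ s, f.eval x = g.eval x) :
    U.card ≤ Fintype.card F ^ (k + 1 - t) :=
  stmt3_general F t k U hdeg hint
end

section
/- Let U be an intersecting family of polynomials over F_q of degree at most 2. Suppose there are more than ⌊(q+1)/2⌋ polynomials h_1, h_2, … in U whose coefficient of x^2 equals a fixed c ∈ F_q, and suppose there exist α, β ∈ F_q such that h_i(α) = β for all these polynomials. Then every polynomial f ∈ U whose coefficient of x^2 is not c satisfies f(α) = β. -/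
/-!
Suppose `f ∈ U` has `f.coeff 2 ≠ c` but `f.eval α ≠ β`. For every `h ∈ H` the difference `f - h`
is a genuine quadratic whose leading coefficient `f.coeff 2 - c` and value `f.eval α - β` at `α`
do not depend on `h`, so by Vieta its roots `x, y` satisfy `(α - x) * (α - y) = m` for a fixed
`m ≠ 0`. Since `h` is determined by its leading coefficient, its value at `α` and one more value,
the root sets of the `f - h` are disjoint subsets of `F \ {α}`, and each is a pair
`{x, α - m / (α - x)}` except for at most two double roots (`(α - x) ^ 2 = m`).
Hence `2 * #H - 2 ≤ q - 1`, contradicting `#H > (q + 1) / 2`.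
-/

open Polynomial Finset

section Quadratics

variable {F : Type*} [Field F]

lemma eval_eq_of_natDegree_le_two {p : F[X]} (hp : p.natDegree ≤ 2) (z : F) :
    p.eval z = p.coeff 2 * z ^ 2 + p.coeff 1 * z + p.coeff 0 := by
  rw [eval_eq_sum_range' (Nat.lt_succ_of_le hp)]
  simp only [sum_range_succ, sum_range_zero, pow_zero, pow_one]
  ring

lemma eq_of_coeff_two_eq_of_eval_eq {p q : F[X]} (hp : p.natDegree ≤ 2) (hq : q.natDegree ≤ 2)
    (h2 : p.coeff 2 = q.coeff 2) {x y : F} (hxy : x ≠ y) (hx : p.eval x = q.eval x)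
    (hy : p.eval y = q.eval y) : p = q := by
  classical
  refine eq_of_degree_sub_lt_of_eval_finset_eq {x, y} ?_ (by simp [hx, hy])
  rw [card_pair hxy, degree_lt_iff_coeff_zero]
  intro n hn
  rcases hn.eq_or_lt with rfl | hn
  · simp [h2]
  · exact coeff_eq_zero_of_natDegree_lt ((natDegree_sub_le_of_le hp hq).trans_lt hn)

lemma card_filter_sq_sub_eq_le_two [DecidableEq F] (s : Finset F) (α m : F) :
    #{x ∈ s | (α - x) ^ 2 = m} ≤ 2 := by
  calc #{x ∈ s | (α - x) ^ 2 = m}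
      ≤ #(nthRootsFinset 2 m) := card_le_card_of_injOn (α - ·)
        (fun x hx => (mem_nthRootsFinset two_pos m).2 (mem_filter.1 hx).2)
        (fun x _ y _ e => sub_right_injective e)
    _ ≤ 2 := by
      rw [nthRootsFinset_def]
      exact (Multiset.toFinset_card_le _).trans (card_nthRoots 2 m)

def partner (α m x : F) : F := α - m / (α - x)

variable {α m x : F}

lemma partner_ne (hm : m ≠ 0) (hx : x ≠ α) : partner α m x ≠ α :=
  fun h => div_ne_zero hm (sub_ne_zero.2 hx.symm) (sub_eq_self.1 h)

lemma partner_partner (hm : m ≠ 0) : partner α m (partner α m x) = x := by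
  simp only [partner, sub_sub_cancel, div_div_cancel₀ hm]

lemma partner_injective (hm : m ≠ 0) : (partner α m).Injective :=
  fun x y e => by rw [← partner_partner hm (x := x), e, partner_partner hm]

lemma partner_eq_self_iff (hx : x ≠ α) : partner α m x = x ↔ (α - x) ^ 2 = m := by
  have hu : α - x ≠ 0 := sub_ne_zero.2 hx.symm
  rw [partner, sub_eq_iff_eq_add, ← sub_eq_iff_eq_add', eq_div_iff hu, sq]

lemma eval_partner_eq_zero {g : F[X]} (hg : g.natDegree ≤ 2) (h2 : g.coeff 2 ≠ 0)
    (hx : x ≠ α) (hgx : g.eval x = 0) : g.eval (partner α (g.eval α / g.coeff 2) x) = 0 := by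
  have hu : α - x ≠ 0 := sub_ne_zero.2 hx.symm
  linear_combination (norm := skip) (α - partner α (g.eval α / g.coeff 2) x) / (α - x) * hgx
  simp only [partner, eval_eq_of_natDegree_le_two hg]
  field_simp
  ring

lemma two_mul_card_le_of_partner_mem [Fintype F] {T : Finset F}
    (hm : m ≠ 0) (hα : α ∉ T) (hT : ∀ x ∈ T, partner α m x ∈ T → partner α m x = x) :
    2 * #T ≤ Fintype.card F + 1 := by
  classical
  set T' := T.image (partner α m)
  have hinter : T ∩ T' ⊆ {x ∈ T | (α - x) ^ 2 = m} := by
    simp only [subset_iff, mem_inter, mem_filter, T', mem_image]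
    rintro _ ⟨hxT, x, hx, rfl⟩
    have hfix := hT x hx hxT
    rw [hfix] at hxT ⊢
    exact ⟨hxT, (partner_eq_self_iff (ne_of_mem_of_not_mem hx hα)).1 hfix⟩
  have hunion : T ∪ T' ⊆ univ.erase α := by
    simp only [subset_iff, mem_union, T', mem_image, mem_erase, mem_univ, and_true]
    rintro x (hx | ⟨y, hy, rfl⟩)
    exacts [ne_of_mem_of_not_mem hx hα, partner_ne hm (ne_of_mem_of_not_mem hy hα)]
  have hcard : #(T ∪ T') ≤ Fintype.card F - 1 := by
    simpa [card_erase_of_mem] using card_le_card hunion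
  have := card_union_add_card_inter T T'
  have : #T' = #T := card_image_of_injective T (partner_injective hm)
  have := (card_le_card hinter).trans (card_filter_sq_sub_eq_le_two T α m)
  have : 0 < Fintype.card F := Fintype.card_pos
  omega

theorem two_mul_card_le_of_forall_exists_eval_eq [Fintype F]
    {f : F[X]} {H : Finset F[X]} {c β : F}
    (hf : f.natDegree ≤ 2) (hfc : f.coeff 2 ≠ c) (hfα : f.eval α ≠ β)
    (hdeg : ∀ h ∈ H, h.natDegree ≤ 2) (hHc : ∀ h ∈ H, h.coeff 2 = c)
    (hαβ : ∀ h ∈ H, h.eval α = β) (hmeet : ∀ h ∈ H, ∃ x, f.eval x = h.eval x) :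
    2 * #H ≤ Fintype.card F + 1 := by
  classical
  set m := (f.eval α - β) / (f.coeff 2 - c)
  have hm : m ≠ 0 := div_ne_zero (sub_ne_zero.2 hfα) (sub_ne_zero.2 hfc)
  choose! r hr using hmeet
  have hrα : ∀ h ∈ H, r h ≠ α := fun h hh hrh => hfα (by rw [← hαβ h hh, ← hrh, hr h hh])
  have huniq : ∀ h₁ ∈ H, ∀ h₂ ∈ H, ∀ x ≠ α,
      f.eval x = h₁.eval x → f.eval x = h₂.eval x → h₁ = h₂ :=
    fun h₁ hh₁ h₂ hh₂ x hx e₁ e₂ => eq_of_coeff_two_eq_of_eval_eq (hdeg h₁ hh₁) (hdeg h₂ hh₂)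
      (by rw [hHc h₁ hh₁, hHc h₂ hh₂]) hx (e₁ ▸ e₂) (by rw [hαβ h₁ hh₁, hαβ h₂ hh₂])
  have hpartner : ∀ h ∈ H, f.eval (partner α m (r h)) = h.eval (partner α m (r h)) := by
    intro h hh
    have := eval_partner_eq_zero (g := f - h) (natDegree_sub_le_of_le hf (hdeg h hh))
      (by simpa [hHc h hh, sub_eq_zero] using hfc) (hrα h hh) (by simp [hr h hh])
    simpa [m, hHc h hh, hαβ h hh, sub_eq_zero] using this
  have hT : #(H.image r) = #H := card_image_of_injOn fun h₁ hh₁ h₂ hh₂ e =>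
    huniq h₁ hh₁ h₂ hh₂ (r h₁) (hrα h₁ hh₁) (hr h₁ hh₁) (e ▸ hr h₂ hh₂)
  rw [← hT]
  refine two_mul_card_le_of_partner_mem hm (by simpa using hrα) ?_
  simp only [mem_image, forall_exists_index, and_imp, forall_apply_eq_imp_iff₂]
  intro h₁ hh₁ h₂ hh₂ e
  have := huniq h₁ hh₁ h₂ hh₂ (r h₂) (hrα h₂ hh₂) (e ▸ hpartner h₁ hh₁) (hr h₂ hh₂)
  rw [← e, this]

end Quadratics

/-- Let `U` be an intersecting family of polynomials over `F_q` of degree at most `2`.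
If more than `⌊(q+1)/2⌋` polynomials in `U` have coefficient of `x^2` equal to a fixed `c`
and all of them pass through the point `(α, β)`, then every `f ∈ U` whose coefficient of
`x^2` is not `c` satisfies `f(α) = β`. -/
theorem stmt6 (F : Type*) [Field F] [Fintype F]
    (U : Finset (Polynomial F)) (hdeg : ∀ f ∈ U, f.natDegree ≤ 2)
    (hint : ∀ f ∈ U, ∀ g ∈ U, ∃ x : F, f.eval x = g.eval x)
    (c : F) (H : Finset (Polynomial F)) (hHU : H ⊆ U)
    (hHc : ∀ h ∈ H, h.coeff 2 = c)
    (hH : (Fintype.card F + 1) / 2 < H.card)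
    (α β : F) (hαβ : ∀ h ∈ H, h.eval α = β) :
    ∀ f ∈ U, f.coeff 2 ≠ c → f.eval α = β := by
  intro f hf hfc
  by_contra hfα
  have := two_mul_card_le_of_forall_exists_eval_eq (hdeg f hf) hfc hfα
    (fun h hh => hdeg h (hHU hh)) hHc hαβ (fun h hh => hint f hf h (hHU hh))
  omega
end

section
/- Let q be even and let U be an intersecting family of polynomials over F_q of degree at most 2 with |U| > (q^2 + q)/2. Suppose H ⊆ U has more than q^2/2 elements and there exist α, β ∈ F_q such that h(α) = β for every h ∈ H. Then f(α) = β for every polynomial f ∈ U. -/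
/-
Translate `x ↦ x + α` and subtract `β`: a quadratic `g` becomes the triple `(a, e, c)` of the
quadratic `a x² + e x + c` with `c = g(α) + β`, and the members of `H` become triples with
`c = 0`. In characteristic two, `(a, e, 0)` meets `(a', e', c)` iff `u x² + w x + c` has a root,
where `(u, w) = (a + a', e + e')`. For `c, w ≠ 0` (so `x ≠ 0`, and put `t = 1/x`) this says that
`u = c t² + w t` for some `t`, i.e. `u` lies in the image of an additive map with kernel
`{0, w/c}`, a subgroup of index two. Counting such pairs `(u, w)` row by row:

* a triple with `c ≠ 0` meets at most `(q² + q)/2 - 1` triples with `c = 0`;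
* two distinct meeting triples with `c ≠ 0` have at most `q²/2` common neighbours with `c = 0`;
  in the hard case `e = e'` a row `w` with `a + a' ∉ {c t² + w t}` lies in a coset of the
  intersection of two distinct index-two subgroups, and only `q/2 - 1` rows are not of this kind.

By the second bound and `|H| > q²/2`, at most one member of `U` has `g(α) ≠ β`; if there is one,
the first bound gives `|U| ≤ (q² + q)/2`.
-/

open Polynomial Finset

namespace IntersectingQuadratics

lemma two_mul_card_inter_le {R : Type*} [Ring R] [DecidableEq R] [CharP R 2] {I J : Finset R}
    (hI : ∀ x ∈ I, ∀ y ∈ I, x + y ∈ I) (hJ : ∀ x ∈ J, ∀ y ∈ J, x + y ∈ J) {z : R}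
    (hzJ : z ∈ J) (hzI : z ∉ I) :
    2 * #(I ∩ J) ≤ #J := by
  have hdisj : Disjoint (I ∩ J) ((I ∩ J).image (· + z)) := by
    refine disjoint_left.2 fun x hx hxz => hzI ?_
    obtain ⟨k, hk, rfl⟩ := mem_image.1 hxz
    have := hI _ (mem_inter.1 hx).1 _ (mem_inter.1 hk).1
    rwa [add_right_comm, CharTwo.add_self_eq_zero, zero_add] at this
  have hsub : I ∩ J ∪ (I ∩ J).image (· + z) ⊆ J := by
    refine union_subset inter_subset_right fun x hx => ?_
    obtain ⟨k, hk, rfl⟩ := mem_image.1 hx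
    exact hJ _ (mem_inter.1 hk).2 _ hzJ
  have := card_le_card hsub
  rw [card_union_of_disjoint hdisj, card_image_of_injective _ (add_left_injective z)] at this
  omega

lemma card_filter_univ_prod {α β : Type*} [Fintype α] [Fintype β] (P : α × β → Prop)
    [DecidablePred P] : #{p | P p} = ∑ b, #{a | P (a, b)} := by
  simp only [card_filter, Fintype.sum_prod_type_right]

variable {F : Type*} [Field F]

abbrev HasRoot (u w c : F) : Prop := ∃ x : F, u * x ^ 2 + w * x + c = 0

/-- The triple `(a, e, c)` stands for the quadratic `a x² + e x + c`. -/
def Meets (p p' : F × F × F) : Prop :=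
  ∃ x, p.1 * x ^ 2 + p.2.1 * x + p.2.2 = p'.1 * x ^ 2 + p'.2.1 * x + p'.2.2

lemma meets_iff_hasRoot [CharP F 2] {p p' : F × F × F} :
    Meets p p' ↔ HasRoot (p.1 + p'.1) (p.2.1 + p'.2.1) (p.2.2 + p'.2.2) :=
  exists_congr fun x => by
    rw [← CharTwo.add_eq_zero]
    constructor <;> intro h <;> linear_combination h

lemma injOn_add_of_snd_snd_eq_zero (b : F × F × F) :
    Set.InjOn (fun p : F × F × F => (p.1 + b.1, p.2.1 + b.2.1)) {p | p.2.2 = 0} := by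
  rintro ⟨a, e, c⟩ (hc : c = 0) ⟨a', e', c'⟩ (hc' : c' = 0) h
  simp only [Prod.mk.injEq, add_left_inj] at h
  simp [h, hc, hc']

def shiftedCoeffs (α β : F) (g : F[X]) : F × F × F := (g.coeff 2, g.coeff 1, g.eval α + β)

lemma eval_eq_of_natDegree_le_two {g : F[X]} (hg : g.natDegree ≤ 2) (x : F) :
    g.eval x = g.coeff 2 * x ^ 2 + g.coeff 1 * x + g.coeff 0 := by
  rw [eval_eq_sum_range' (Nat.lt_succ_of_le hg)]
  simp only [sum_range_succ, sum_range_zero]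
  ring

lemma injOn_shiftedCoeffs (α β : F) : Set.InjOn (shiftedCoeffs α β) {g | g.natDegree ≤ 2} := by
  intro g hg g' hg' h
  simp only [shiftedCoeffs, Prod.mk.injEq, add_left_inj] at h
  obtain ⟨h2, h1, hα⟩ := h
  have h0 : g.coeff 0 = g'.coeff 0 := by
    rwa [eval_eq_of_natDegree_le_two hg, eval_eq_of_natDegree_le_two hg', h2, h1,
      add_right_inj] at hα
  ext n
  match n with
  | 0 => exact h0
  | 1 => exact h1
  | 2 => exact h2
  | n + 3 =>
    rw [coeff_eq_zero_of_natDegree_lt (by simp at hg; omega),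
      coeff_eq_zero_of_natDegree_lt (by simp at hg'; omega)]

lemma eval_shiftedCoeffs [CharP F 2] {g : F[X]} (hg : g.natDegree ≤ 2) (α β y : F) :
    (shiftedCoeffs α β g).1 * y ^ 2 + (shiftedCoeffs α β g).2.1 * y + (shiftedCoeffs α β g).2.2 =
      g.eval (y + α) + β := by
  simp only [shiftedCoeffs, eval_eq_of_natDegree_le_two hg, CharTwo.add_sq]
  ring

lemma meets_shiftedCoeffs [CharP F 2] {f g : F[X]} (hf : f.natDegree ≤ 2) (hg : g.natDegree ≤ 2)
    (α β : F) (h : ∃ x, f.eval x = g.eval x) :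
    Meets (shiftedCoeffs α β f) (shiftedCoeffs α β g) := by
  obtain ⟨x, hx⟩ := h
  refine ⟨x + α, ?_⟩
  rw [eval_shiftedCoeffs hf, eval_shiftedCoeffs hg, add_assoc, CharTwo.add_self_eq_zero,
    add_zero, hx]

section Counting

variable [Fintype F] [DecidableEq F]

def quadImg (c w : F) : Finset F := univ.image fun t => c * t ^ 2 + w * t

lemma mem_quadImg {c w u : F} : u ∈ quadImg c w ↔ ∃ t, c * t ^ 2 + w * t = u := by
  simp [quadImg]

lemma zero_mem_quadImg (c w : F) : 0 ∈ quadImg c w :=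
  mem_quadImg.2 ⟨0, by simp⟩

lemma quadImg_eq_image {c w : F} (hc : c ≠ 0) (hw : w ≠ 0) :
    quadImg c w = (quadImg 1 1).image (w ^ 2 / c * ·) := by
  ext u
  simp only [mem_image, mem_quadImg]
  constructor
  · rintro ⟨t, rfl⟩
    exact ⟨_, ⟨c * t / w, rfl⟩, by field_simp⟩
  · rintro ⟨_, ⟨s, rfl⟩, rfl⟩
    exact ⟨w * s / c, by field_simp⟩

lemma mem_quadImg_iff {c w u : F} (hc : c ≠ 0) (hw : w ≠ 0) :
    u ∈ quadImg c w ↔ c * u / w ^ 2 ∈ quadImg 1 1 := by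
  rw [quadImg_eq_image hc hw, mem_image]
  constructor
  · rintro ⟨s, hs, rfl⟩
    convert hs using 1
    field_simp
  · exact fun h => ⟨_, h, by field_simp⟩

variable [CharP F 2]

lemma add_mem_quadImg {c w x y : F} (hx : x ∈ quadImg c w) (hy : y ∈ quadImg c w) :
    x + y ∈ quadImg c w := by
  obtain ⟨s, rfl⟩ := mem_quadImg.1 hx
  obtain ⟨t, rfl⟩ := mem_quadImg.1 hy
  exact mem_quadImg.2 ⟨s + t, by rw [CharTwo.add_sq]; ring⟩

lemma two_mul_card_quadImg_one : 2 * #(quadImg (1 : F) 1) = Fintype.card F := by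
  have hfibre (s : F) : #{t : F | 1 * t ^ 2 + 1 * t = s ^ 2 + s} = 2 := by
    have hfactor (t : F) : t ^ 2 + t + (s ^ 2 + s) = (t + s) * (t + s + 1) := by
      linear_combination (-(t * s)) * CharTwo.two_eq_zero (R := F)
    have : ({t | 1 * t ^ 2 + 1 * t = s ^ 2 + s} : Finset F) = {s, s + 1} := by
      ext t
      simp only [one_mul, mem_filter, mem_univ, true_and, mem_insert, mem_singleton]
      rw [← CharTwo.add_eq_zero, hfactor, mul_eq_zero, CharTwo.add_eq_zero, add_assoc,
        CharTwo.add_eq_zero]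
    rw [this, card_pair (by simp)]
  rw [← card_univ, card_eq_sum_card_image (fun t : F => 1 * t ^ 2 + 1 * t) univ, mul_comm,
    ← smul_eq_mul, ← sum_const]
  refine sum_congr rfl fun u hu => ?_
  obtain ⟨s, rfl⟩ := mem_quadImg.1 hu
  simpa using (hfibre s).symm

lemma two_mul_card_quadImg {c w : F} (hc : c ≠ 0) (hw : w ≠ 0) :
    2 * #(quadImg c w) = Fintype.card F := by
  rw [quadImg_eq_image hc hw,
    card_image_of_injective _ (mul_right_injective₀ (by positivity)), two_mul_card_quadImg_one]

lemma mem_quadImg_of_hasRoot {u w c : F} (hc : c ≠ 0) (h : HasRoot u w c) :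
    u ∈ quadImg c w := by
  obtain ⟨x, hx⟩ := h
  have hx0 : x ≠ 0 := by rintro rfl; simp_all
  refine mem_quadImg.2 ⟨x⁻¹, ?_⟩
  field_simp
  linear_combination hx - u * x ^ 2 * CharTwo.two_eq_zero (R := F)

lemma two_mul_card_le_of_hasRoot {w c : F} (hc : c ≠ 0) (hw : w ≠ 0) (a : F) {s : Finset F}
    (hs : ∀ u ∈ s, HasRoot (u + a) w c) : 2 * #s ≤ Fintype.card F := by
  rw [← two_mul_card_quadImg hc hw]
  refine Nat.mul_le_mul_left 2 (card_le_card_of_injOn (· + a) ?_ ?_)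
  · exact fun u hu => mem_quadImg_of_hasRoot hc (hs u hu)
  · exact fun x _ y _ h => add_right_cancel h

lemma two_mul_card_hasRoot_add_two_le {c : F} (hc : c ≠ 0) :
    2 * #{p : F × F | HasRoot p.1 p.2 c} + 2 ≤ Fintype.card F ^ 2 + Fintype.card F := by
  have hzero : #{u : F | HasRoot u 0 c} + 1 ≤ Fintype.card F := by
    have : ({u | HasRoot u 0 c} : Finset F) ⊆ {0}ᶜ := by
      intro u hu
      rw [mem_compl, mem_singleton]
      rintro rfl
      obtain ⟨x, hx⟩ := (mem_filter.1 hu).2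
      exact hc (by simpa using hx)
    have := card_le_card this
    rw [card_compl, card_singleton] at this
    have := Fintype.card_pos (α := F)
    omega
  have hrow : ∀ w ∈ univ.erase (0 : F), 2 * #{u : F | HasRoot u w c} ≤ Fintype.card F :=
    fun w hw => two_mul_card_le_of_hasRoot hc (ne_of_mem_erase hw) 0 (by simp)
  have hsum := sum_le_sum hrow
  rw [card_filter_univ_prod, mul_sum, ← add_sum_erase _ _ (mem_univ 0)]
  simp only [sum_const, card_erase_of_mem (mem_univ _), card_univ, smul_eq_mul] at hsum ⊢
  obtain ⟨m, hm⟩ : ∃ m, Fintype.card F = m + 1 :=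
    ⟨_, (Nat.succ_pred_eq_of_pos Fintype.card_pos).symm⟩
  rw [hm, Nat.add_sub_cancel] at hsum
  rw [hm] at hzero ⊢
  nlinarith

lemma four_mul_card_hasRoot_both_le {a w c c' : F} (hc : c ≠ 0) (hc' : c' ≠ 0) (hw : w ≠ 0)
    (ha : a ∉ quadImg c w) :
    4 * #{u | HasRoot u w c ∧ HasRoot (u + a) w c'} ≤ Fintype.card F := by
  obtain hempty | ⟨u₀, hu₀⟩ :=
    ({u | HasRoot u w c ∧ HasRoot (u + a) w c'} : Finset F).eq_empty_or_nonempty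
  · simp [hempty]
  obtain ⟨hu₀c, hu₀c'⟩ := (mem_filter.1 hu₀).2
  have hm := mem_quadImg_of_hasRoot hc hu₀c
  have hm' := mem_quadImg_of_hasRoot hc' hu₀c'
  have hne : quadImg c w ≠ quadImg c' w := by
    intro h
    apply ha
    have := add_mem_quadImg hm (h ▸ hm')
    rwa [CharTwo.add_cancel_left] at this
  obtain ⟨z, hzJ, hzI⟩ : ∃ z ∈ quadImg c' w, z ∉ quadImg c w := by
    by_contra! h
    have := two_mul_card_quadImg hc hw
    have := two_mul_card_quadImg hc' hw
    exact hne (eq_of_subset_of_card_le h (by omega)).symm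
  have hrow : #{u | HasRoot u w c ∧ HasRoot (u + a) w c'} ≤ #(quadImg c w ∩ quadImg c' w) := by
    refine card_le_card_of_injOn (· + u₀) (fun u hu => ?_) fun x _ y _ h => add_right_cancel h
    obtain ⟨huc, huc'⟩ := (mem_filter.1 hu).2
    refine mem_inter.2 ⟨add_mem_quadImg (mem_quadImg_of_hasRoot hc huc) hm, ?_⟩
    have := add_mem_quadImg (mem_quadImg_of_hasRoot hc' huc') hm'
    rwa [add_add_add_comm, CharTwo.add_self_eq_zero, add_zero] at this
  have := two_mul_card_inter_le (fun x hx y hy => add_mem_quadImg hx hy)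
    (fun x hx y hy => add_mem_quadImg hx hy) hzJ hzI
  have := two_mul_card_quadImg hc' hw
  omega

lemma card_hasRoot_both_zero_add_two_le {a c c' : F} (hc : c ≠ 0) (hc' : c' ≠ 0) (ha : a ≠ 0) :
    #{u | HasRoot u 0 c ∧ HasRoot (u + a) 0 c'} + 2 ≤ Fintype.card F := by
  have hsub : ({u | HasRoot u 0 c ∧ HasRoot (u + a) 0 c'} : Finset F) ⊆ {0, a}ᶜ := by
    intro u hu
    obtain ⟨⟨x, hx⟩, ⟨x', hx'⟩⟩ := (mem_filter.1 hu).2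
    simp only [mem_compl, mem_insert, mem_singleton, not_or]
    constructor
    · rintro rfl; exact hc (by simpa using hx)
    · rintro rfl; exact hc' (by simpa [CharTwo.add_self_eq_zero] using hx')
  have := card_le_card hsub
  have := card_add_card_compl ({0, a} : Finset F)
  rw [card_pair ha.symm] at this
  omega

lemma two_mul_card_mem_quadImg_add_two_le {c δ : F} (hc : c ≠ 0) (hδ : δ ≠ 0) :
    2 * #{w ∈ univ.erase 0 | δ ∈ quadImg c w} + 2 ≤ Fintype.card F := by
  have hinj : #{w ∈ univ.erase 0 | δ ∈ quadImg c w} ≤ #((quadImg (1 : F) 1).erase 0) := by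
    refine card_le_card_of_injOn (fun w => c * δ / w ^ 2) (fun w hw => ?_) fun w hw w' hw' h => ?_
    · obtain ⟨hw0, hδw⟩ := mem_filter.1 hw
      have hw0 := ne_of_mem_erase hw0
      exact mem_erase.2 ⟨by positivity, (mem_quadImg_iff hc hw0).1 hδw⟩
    · have hw0 := ne_of_mem_erase (mem_filter.1 hw).1
      have hw0' := ne_of_mem_erase (mem_filter.1 hw').1
      simp only [div_eq_div_iff (pow_ne_zero 2 hw0) (pow_ne_zero 2 hw0'),
        mul_right_inj' (mul_ne_zero hc hδ)] at h
      exact CharTwo.sq_injective h.symm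
  have := card_erase_add_one (zero_mem_quadImg (1 : F) 1)
  have := two_mul_card_quadImg_one (F := F)
  omega

lemma two_mul_sum_card_hasRoot_both_le {a c c' : F} (hc : c ≠ 0) (hc' : c' ≠ 0) (ha : a ≠ 0) :
    2 * ∑ w, #{u | HasRoot u w c ∧ HasRoot (u + a) w c'} ≤ Fintype.card F ^ 2 := by
  have hzero := card_hasRoot_both_zero_add_two_le hc hc' ha
  have hgood := two_mul_card_mem_quadImg_add_two_le hc ha
  obtain ⟨m, hq⟩ : ∃ m, Fintype.card F = m + 2 := ⟨Fintype.card F - 2, by omega⟩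
  set g := #{w ∈ univ.erase 0 | a ∈ quadImg c w}
  have hrow : ∀ w ∈ univ.erase (0 : F), 4 * #{u | HasRoot u w c ∧ HasRoot (u + a) w c'} ≤
      (m + 2) + if a ∈ quadImg c w then m + 2 else 0 := by
    intro w hw
    rw [← hq]
    split_ifs with h
    · have := two_mul_card_le_of_hasRoot hc (ne_of_mem_erase hw) 0
        (s := {u | HasRoot u w c ∧ HasRoot (u + a) w c'})
        (fun u hu => by simpa using (mem_filter.1 hu).2.1)
      omega
    · have := four_mul_card_hasRoot_both_le hc hc' (ne_of_mem_erase hw) h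
      omega
  have hsum : 4 * ∑ w ∈ univ.erase 0, #{u | HasRoot u w c ∧ HasRoot (u + a) w c'} ≤
      (m + 1) * (m + 2) + g * (m + 2) := by
    rw [mul_sum]
    refine (sum_le_sum hrow).trans_eq ?_
    rw [sum_add_distrib, sum_const, ← sum_filter, sum_const, card_erase_of_mem (mem_univ 0),
      card_univ, hq, show m + 2 - 1 = m + 1 by omega, smul_eq_mul, smul_eq_mul]
  rw [← add_sum_erase _ _ (mem_univ 0), hq]
  rw [hq] at hzero hgood
  have : 2 * g * (m + 2) ≤ m * (m + 2) := Nat.mul_le_mul_right _ (by omega)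
  nlinarith

lemma two_mul_card_hasRoot_both_le {a e c c' : F} (hc : c ≠ 0) (hc' : c' ≠ 0)
    (hae : a ≠ 0 ∨ e ≠ 0) :
    2 * #{p : F × F | HasRoot p.1 p.2 c ∧ HasRoot (p.1 + a) (p.2 + e) c'} ≤
      Fintype.card F ^ 2 := by
  rw [card_filter_univ_prod]
  obtain rfl | he := eq_or_ne e 0
  · simpa only [add_zero] using
      two_mul_sum_card_hasRoot_both_le hc hc' (hae.resolve_right (by simp))
  rw [mul_sum, sq, ← smul_eq_mul, ← card_univ, ← sum_const]
  refine sum_le_sum fun w _ => ?_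
  obtain rfl | hw := eq_or_ne w 0
  · exact two_mul_card_le_of_hasRoot hc' (by simpa using he) a
      fun u hu => by simpa using (mem_filter.1 hu).2.2
  · exact two_mul_card_le_of_hasRoot hc hw 0 fun u hu => by simpa using (mem_filter.1 hu).2.1

lemma two_mul_card_meets_add_two_le {f : F × F × F} (hf : f.2.2 ≠ 0) {A : Finset (F × F × F)}
    (hA0 : ∀ p ∈ A, p.2.2 = 0) (hA : ∀ p ∈ A, Meets p f) :
    2 * #A + 2 ≤ Fintype.card F ^ 2 + Fintype.card F := by
  have : #A ≤ #{p : F × F | HasRoot p.1 p.2 f.2.2} := by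
    refine card_le_card_of_injOn _ (fun p hp => ?_) ((injOn_add_of_snd_snd_eq_zero f).mono hA0)
    have := meets_iff_hasRoot.1 (hA p hp)
    rw [hA0 p hp, zero_add] at this
    simpa using this
  have := two_mul_card_hasRoot_add_two_le hf
  omega

lemma two_mul_card_meets_both_le {b b' : F × F × F} (hb : b.2.2 ≠ 0) (hb' : b'.2.2 ≠ 0)
    (hne : b ≠ b') (hbb' : Meets b b') {W : Finset (F × F × F)} (hW0 : ∀ p ∈ W, p.2.2 = 0)
    (hW : ∀ p ∈ W, Meets p b) (hW' : ∀ p ∈ W, Meets p b') :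
    2 * #W ≤ Fintype.card F ^ 2 := by
  have hae : b.1 + b'.1 ≠ 0 ∨ b.2.1 + b'.2.1 ≠ 0 := by
    by_contra! h
    obtain ⟨x, hx⟩ := meets_iff_hasRoot.1 hbb'
    rw [h.1, h.2, zero_mul, zero_mul, zero_add, zero_add] at hx
    simp only [CharTwo.add_eq_zero] at h hx
    exact hne (Prod.ext h.1 (Prod.ext h.2 hx))
  have htrans (x y z : F) : x + y + (y + z) = x + z := by
    rw [add_assoc, CharTwo.add_cancel_left]
  refine le_trans (Nat.mul_le_mul_left 2 ?_) (two_mul_card_hasRoot_both_le hb hb' hae)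
  refine card_le_card_of_injOn _ (fun p hp => ?_) ((injOn_add_of_snd_snd_eq_zero b).mono hW0)
  have hpb := meets_iff_hasRoot.1 (hW p hp)
  have hpb' := meets_iff_hasRoot.1 (hW' p hp)
  rw [hW0 p hp, zero_add] at hpb hpb'
  simpa [htrans] using ⟨hpb, hpb'⟩

theorem snd_snd_eq_zero_of_meets {V W : Finset (F × F × F)}
    (hV : ∀ p ∈ V, ∀ p' ∈ V, Meets p p')
    (hVcard : Fintype.card F ^ 2 + Fintype.card F < 2 * #V) (hWV : W ⊆ V)
    (hWcard : Fintype.card F ^ 2 < 2 * #W) (hW0 : ∀ p ∈ W, p.2.2 = 0) :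
    ∀ p ∈ V, p.2.2 = 0 := by
  by_contra! ⟨f, hfV, hf⟩
  have hB : {p ∈ V | ¬p.2.2 = 0} ⊆ {f} := by
    intro b hb
    obtain ⟨hbV, hb⟩ := mem_filter.1 hb
    by_contra hbf
    have := two_mul_card_meets_both_le hb hf (by simpa using hbf) (hV b hbV f hfV) hW0
      (fun p hp => hV p (hWV hp) b hbV) (fun p hp => hV p (hWV hp) f hfV)
    omega
  have hA := two_mul_card_meets_add_two_le hf (A := {p ∈ V | p.2.2 = 0})
    (fun p hp => (mem_filter.1 hp).2) (fun p hp => hV p (mem_filter.1 hp).1 f hfV)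
  have := card_filter_add_card_filter_not (s := V) (fun p => p.2.2 = 0)
  have := card_le_card hB
  rw [card_singleton] at this
  omega

end Counting

end IntersectingQuadratics

open IntersectingQuadratics

/-- Let `q` be even and `U` an intersecting family of polynomials over `F_q` of degree at
most `2` with `|U| > (q^2 + q)/2`. If a subfamily `H ⊆ U` with `|H| > q^2/2` passes through
a common point `(α, β)`, then every `f ∈ U` satisfies `f(α) = β`. -/
theorem stmt7 (F : Type*) [Field F] [Fintype F] (hq : Even (Fintype.card F))
    (U : Finset (Polynomial F)) (hdeg : ∀ f ∈ U, f.natDegree ≤ 2)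
    (hint : ∀ f ∈ U, ∀ g ∈ U, ∃ x : F, f.eval x = g.eval x)
    (hU : Fintype.card F ^ 2 + Fintype.card F < 2 * U.card)
    (H : Finset (Polynomial F)) (hHU : H ⊆ U)
    (hH : Fintype.card F ^ 2 < 2 * H.card)
    (α β : F) (hαβ : ∀ h ∈ H, h.eval α = β) :
    ∀ f ∈ U, f.eval α = β := by
  classical
  have : CharP F 2 :=
    ringChar.eq_iff.1 (FiniteField.even_card_iff_char_two.2 (Nat.even_iff.1 hq))
  have hinj : Set.InjOn (shiftedCoeffs α β) U := (injOn_shiftedCoeffs α β).mono hdeg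
  have hzero := snd_snd_eq_zero_of_meets (V := U.image (shiftedCoeffs α β))
    (W := H.image (shiftedCoeffs α β))
    (by
      simp only [forall_mem_image]
      exact fun f hf g hg => meets_shiftedCoeffs (hdeg f hf) (hdeg g hg) α β (hint f hf g hg))
    (by rwa [card_image_of_injOn hinj])
    (image_subset_image hHU)
    (by rwa [card_image_of_injOn (hinj.mono hHU)])
    (by
      simp only [forall_mem_image]
      exact fun h hh => by simp [shiftedCoeffs, hαβ h hh, CharTwo.add_self_eq_zero])
  exact fun f hf => CharTwo.add_eq_zero.1 (hzero _ (mem_image_of_mem _ hf))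
end

section
/- Let k ≥ 2 and let U be an intersecting family of polynomials over F_q of degree at most k. Suppose there are more than (q−1)·q^{k−2} polynomials h_i in U whose coefficient of x^k equals a fixed c ∈ F_q, and suppose there exist α, β ∈ F_q such that h_i(α) = β for all these polynomials. Then every polynomial f ∈ U whose coefficient of x^k is not c satisfies f(α) = β. -/
open Polynomial

/-!
Suppose `f ∈ U` has `f(α) ≠ β`. For `h ∈ H`, the polynomial `g = h - f` has degree at most `k`,
coefficient of `x^k` equal to `c - f_k` and the nonzero value `g(α) = β - f(α)`; since the graphs
of `h` and `f` meet, `g` has a root `x`, necessarily `x ≠ α`. Writing `g = (X - x) r`, the cofactor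
`r` has top coefficient `c - f_k` and constant term fixed by `r(α) = g(α) / (α - x)`, so `g` is
determined by `x` and the `k - 2` middle coefficients of `r`. Hence there are at most
`(q - 1) q^(k-2)` such `g`, contradicting the size of `H`.
-/

namespace Polynomial

section CommRing

variable {R : Type*} [CommRing R]

theorem eq_of_coeff_eq_of_eval_eq {p q : R[X]} (hcoeff : ∀ i, 0 < i → p.coeff i = q.coeff i)
    {a : R} (heval : p.eval a = q.eval a) : p = q := by
  have hconst : p - q = C ((p - q).coeff 0) :=
    eq_C_of_natDegree_le_zero <| natDegree_le_iff_coeff_eq_zero.2 fun i hi => by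
      rw [coeff_sub, hcoeff i (mod_cast hi), sub_self]
  have hzero : (p - q).coeff 0 = 0 := by
    simpa [heval] using (congrArg (eval a) hconst).symm
  rwa [hzero, C_0, sub_eq_zero] at hconst

theorem coeff_divByMonic_X_sub_C_of_natDegree_le {p : R[X]} {n : ℕ} (hp : p.natDegree ≤ n + 1)
    (a : R) : (p /ₘ (X - C a)).coeff n = p.coeff (n + 1) := by
  nontriviality R
  have hquot : (p /ₘ (X - C a)).natDegree < n + 1 := by
    rw [natDegree_divByMonic _ (monic_X_sub_C a), natDegree_X_sub_C]
    omega
  rw [coeff_divByMonic_X_sub_C_rec, coeff_eq_zero_of_natDegree_lt hquot, mul_zero, add_zero]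

end CommRing

section IsDomain

variable {R : Type*} [CommRing R] [IsDomain R]

theorem eq_of_coeff_divByMonic_X_sub_C_eq {k : ℕ} {x a : R} (hxa : x ≠ a) {p q : R[X]}
    (hp : p.natDegree ≤ k) (hq : q.natDegree ≤ k) (htop : p.coeff k = q.coeff k)
    (hpx : p.IsRoot x) (hqx : q.IsRoot x) (heval : p.eval a = q.eval a)
    (hmid : ∀ i < k - 2, (p /ₘ (X - C x)).coeff (i + 1) = (q /ₘ (X - C x)).coeff (i + 1)) :
    p = q := by
  rw [← mul_divByMonic_eq_iff_isRoot.2 hpx, ← mul_divByMonic_eq_iff_isRoot.2 hqx]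
  congr 1
  refine eq_of_coeff_eq_of_eval_eq (fun i hi => ?_) (a := a) ?_
  · obtain _ | j := i
    · omega
    by_cases hjk : j + 2 < k
    · exact hmid j (by omega)
    rw [coeff_divByMonic_X_sub_C_of_natDegree_le (by omega),
      coeff_divByMonic_X_sub_C_of_natDegree_le (by omega)]
    rcases (show j + 2 = k ∨ k < j + 2 by omega) with rfl | hlt
    · exact htop
    · rw [coeff_eq_zero_of_natDegree_lt (by omega), coeff_eq_zero_of_natDegree_lt (by omega)]
  · have hcofactor : ∀ s : R[X], s.IsRoot x → (a - x) * (s /ₘ (X - C x)).eval a = s.eval a :=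
      fun s hs => by
        conv_rhs => rw [← mul_divByMonic_eq_iff_isRoot.2 hs]
        simp
    refine mul_left_cancel₀ (sub_ne_zero.2 hxa.symm) ?_
    rw [hcofactor p hpx, hcofactor q hqx, heval]

variable [Fintype R] [DecidableEq R]

theorem card_filter_isRoot_le {k : ℕ} {a b d x : R} (hxa : x ≠ a) (G : Finset R[X])
    (hdeg : ∀ g ∈ G, g.natDegree ≤ k) (hcoeff : ∀ g ∈ G, g.coeff k = d)
    (heval : ∀ g ∈ G, g.eval a = b) :
    (G.filter (·.IsRoot x)).card ≤ Fintype.card R ^ (k - 2) := by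
  have hinj : Set.InjOn (fun g (i : Fin (k - 2)) => (g /ₘ (X - C x)).coeff (i + 1))
      (G.filter (·.IsRoot x)) := by
    intro p hp q hq hpq
    rw [Finset.mem_coe, Finset.mem_filter] at hp hq
    refine eq_of_coeff_divByMonic_X_sub_C_eq hxa (hdeg p hp.1) (hdeg q hq.1)
      ((hcoeff p hp.1).trans (hcoeff q hq.1).symm) hp.2 hq.2
      ((heval p hp.1).trans (heval q hq.1).symm) fun i hi => congrFun hpq ⟨i, hi⟩
  calc (G.filter (·.IsRoot x)).card
      ≤ (Finset.univ : Finset (Fin (k - 2) → R)).card :=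
        Finset.card_le_card_of_injOn _ (fun _ _ => Finset.mem_univ _) hinj
    _ = Fintype.card R ^ (k - 2) := by simp

theorem card_le_of_forall_exists_isRoot {k : ℕ} {a b d : R} (hb : b ≠ 0) (G : Finset R[X])
    (hdeg : ∀ g ∈ G, g.natDegree ≤ k) (hcoeff : ∀ g ∈ G, g.coeff k = d)
    (heval : ∀ g ∈ G, g.eval a = b) (hroot : ∀ g ∈ G, ∃ x, g.IsRoot x) :
    G.card ≤ (Fintype.card R - 1) * Fintype.card R ^ (k - 2) := by
  have hcover : G ⊆ (Finset.univ.erase a).biUnion (fun x => G.filter (·.IsRoot x)) := by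
    intro g hg
    obtain ⟨x, hx⟩ := hroot g hg
    have hxa : x ≠ a := by
      rintro rfl
      exact hb (heval g hg ▸ hx)
    simpa [hxa, hg] using ⟨x, hxa, hx⟩
  calc G.card ≤ _ := Finset.card_le_card hcover
    _ ≤ (Finset.univ.erase a).card * Fintype.card R ^ (k - 2) :=
        Finset.card_biUnion_le_card_mul _ _ _ fun x hx =>
          card_filter_isRoot_le (Finset.ne_of_mem_erase hx) G hdeg hcoeff heval
    _ = (Fintype.card R - 1) * Fintype.card R ^ (k - 2) := by
        rw [Finset.card_erase_of_mem (Finset.mem_univ a), Finset.card_univ]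

end IsDomain

end Polynomial

theorem stmt9_general (F : Type*) [Field F] [Fintype F] (k : ℕ)
    (U : Finset (Polynomial F)) (hdeg : ∀ f ∈ U, f.natDegree ≤ k)
    (hint : ∀ f ∈ U, ∀ g ∈ U, ∃ x : F, f.eval x = g.eval x)
    (c : F) (H : Finset (Polynomial F)) (hHU : H ⊆ U)
    (hHc : ∀ h ∈ H, h.coeff k = c)
    (hH : (Fintype.card F - 1) * Fintype.card F ^ (k - 2) < H.card)
    (α β : F) (hαβ : ∀ h ∈ H, h.eval α = β) :
    ∀ f ∈ U, f.coeff k ≠ c → f.eval α = β := by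
  classical
  intro f hf _
  by_contra hfα
  have hcard : (H.image (· - f)).card = H.card :=
    Finset.card_image_of_injective _ sub_left_injective
  have hbound := card_le_of_forall_exists_isRoot (k := k) (a := α) (d := c - f.coeff k)
    (sub_ne_zero.2 (Ne.symm hfα)) (H.image (· - f))
    (by
      simp only [Finset.forall_mem_image]
      exact fun h hh => (natDegree_sub_le h f).trans (max_le (hdeg h (hHU hh)) (hdeg f hf)))
    (by simp only [Finset.forall_mem_image, coeff_sub]; exact fun h hh => by rw [hHc h hh])
    (by simp only [Finset.forall_mem_image, eval_sub]; exact fun h hh => by rw [hαβ h hh])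
    (by
      simp only [Finset.forall_mem_image, IsRoot, eval_sub, sub_eq_zero]
      exact fun h hh => hint h (hHU hh) f hf)
  omega

/-- Let `U` be an intersecting family of polynomials over `F_q` of degree at most `k` (`k ≥ 2`).
If more than `(q−1) q^{k−2}` polynomials in `U` have coefficient of `x^k` equal to a fixed `c`
and all of them pass through the point `(α, β)`, then every `f ∈ U` whose coefficient of `x^k`
is not `c` satisfies `f(α) = β`. -/
theorem stmt9 (F : Type*) [Field F] [Fintype F] (k : ℕ) (hk : 2 ≤ k)
    (U : Finset (Polynomial F)) (hdeg : ∀ f ∈ U, f.natDegree ≤ k)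
    (hint : ∀ f ∈ U, ∀ g ∈ U, ∃ x : F, f.eval x = g.eval x)
    (c : F) (H : Finset (Polynomial F)) (hHU : H ⊆ U)
    (hHc : ∀ h ∈ H, h.coeff k = c)
    (hH : (Fintype.card F - 1) * Fintype.card F ^ (k - 2) < H.card)
    (α β : F) (hαβ : ∀ h ∈ H, h.eval α = β) :
    ∀ f ∈ U, f.coeff k ≠ c → f.eval α = β :=
  stmt9_general F k U hdeg hint c H hHU hHc hH α β hαβ
end

section
/- Let q be a prime power with q > 9 if q is odd and q > 2 if q is even, let k > 1, and let U be an intersecting family of polynomials over F_q of degree at most k with |U| > q^k − q^{k−1}. If F and F' are both intersecting families of polynomials over F_q of degree at most k, each of size q^k and each containing U, then F = F'. That is, U extends uniquely to an intersecting family of q^k polynomials of degree at most k. -/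
/-!
Suppose `f₀ ∈ V \ W`. If `h` has degree at most `k` and no root, the `q^(k+1)` polynomials
`w + c h` (`w ∈ W`, `c ∈ F_q`) are pairwise distinct because `W` is intersecting, so they are
all polynomials of degree at most `k`; in particular `f₀ = w + c h` with `c ≠ 0`. Then `w - f₀`
is a nonzero multiple of `h`, so `w` misses `f₀ ∈ V` and hence lies in `W \ U`, and each such
`w` arises from at most `q - 1` polynomials `h`. A second-moment count of roots shows there are at
least `(q - 1) q^(k-1)` root-free polynomials of degree at most `k`, so `|W \ U| ≥ q^(k-1)`,
contradicting `|U| > q^k - q^(k-1)`.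
-/

open Polynomial Finset

open scoped Classical

section

variable (F : Type*) [Field F] [Fintype F]

noncomputable def degreeLEFinset (k : ℕ) : Finset F[X] :=
  univ.image fun v : Fin (k + 1) → F => ((degreeLTEquiv F (k + 1)).symm v : F[X])

variable {F} {k : ℕ}

lemma mem_degreeLEFinset {f : F[X]} : f ∈ degreeLEFinset F k ↔ f.natDegree ≤ k := by
  rw [natDegree_le_iff_degree_le, ← mem_degreeLE, ← degreeLT_succ_eq_degreeLE]
  simp only [degreeLEFinset, mem_image, mem_univ, true_and]
  exact ⟨fun ⟨v, hv⟩ => hv ▸ ((degreeLTEquiv F (k + 1)).symm v).2,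
    fun hf => ⟨degreeLTEquiv F (k + 1) ⟨f, hf⟩, by simp⟩⟩

lemma card_degreeLEFinset (k : ℕ) : #(degreeLEFinset F k) = Fintype.card F ^ (k + 1) := by
  rw [degreeLEFinset, card_image_of_injective _
    fun v w h => (degreeLTEquiv F (k + 1)).symm.injective (Subtype.ext h)]
  simp

lemma card_filter_dvd_degreeLEFinset {m : F[X]} (hm : m ≠ 0) (hmk : m.natDegree ≤ k) :
    #((degreeLEFinset F k).filter (m ∣ ·)) = Fintype.card F ^ (k + 1 - m.natDegree) := by
  have hmul : (degreeLEFinset F k).filter (m ∣ ·) =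
      (degreeLEFinset F (k - m.natDegree)).image (m * ·) := by
    ext f
    simp only [mem_filter, mem_image, mem_degreeLEFinset]
    constructor
    · rintro ⟨hf, g, rfl⟩
      refine ⟨g, ?_, rfl⟩
      rcases eq_or_ne g 0 with rfl | hg
      · simp
      · rw [natDegree_mul hm hg] at hf
        omega
    · rintro ⟨g, hg, rfl⟩
      exact ⟨natDegree_mul_le.trans (by omega), dvd_mul_right m g⟩
  rw [hmul, card_image_of_injective _ (mul_right_injective₀ hm), card_degreeLEFinset]
  congr 1
  omega

lemma card_filter_isRoot (hk : 1 ≤ k) (a : F) :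
    #((degreeLEFinset F k).filter (·.IsRoot a)) = Fintype.card F ^ k := by
  simp_rw [← dvd_iff_isRoot]
  rw [card_filter_dvd_degreeLEFinset (X_sub_C_ne_zero a) (by rwa [natDegree_X_sub_C]),
    natDegree_X_sub_C, Nat.add_sub_cancel]

lemma card_filter_isRoot_and_isRoot (hk : 2 ≤ k) {a b : F} (hab : a ≠ b) :
    #((degreeLEFinset F k).filter fun f => f.IsRoot a ∧ f.IsRoot b) =
      Fintype.card F ^ (k - 1) := by
  have hcop : IsCoprime (X - C a) (X - C b) :=
    isCoprime_X_sub_C_of_isUnit_sub (sub_ne_zero.mpr hab).isUnit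
  have hdeg : ((X - C a) * (X - C b)).natDegree = 2 := by
    rw [natDegree_mul (X_sub_C_ne_zero a) (X_sub_C_ne_zero b), natDegree_X_sub_C,
      natDegree_X_sub_C]
  have hfilter : (degreeLEFinset F k).filter (fun f => f.IsRoot a ∧ f.IsRoot b) =
      (degreeLEFinset F k).filter ((X - C a) * (X - C b) ∣ ·) := by
    refine filter_congr fun f _ => ?_
    simp_rw [← dvd_iff_isRoot]
    exact ⟨fun h => hcop.mul_dvd h.1 h.2,
      fun h => ⟨(dvd_mul_right _ _).trans h, (dvd_mul_left _ _).trans h⟩⟩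
  rw [hfilter, card_filter_dvd_degreeLEFinset (mul_ne_zero (X_sub_C_ne_zero a) (X_sub_C_ne_zero b))
    (by omega), hdeg, Nat.add_sub_add_right k 1 1]

lemma sum_card_roots (hk : 1 ≤ k) :
    ∑ f ∈ degreeLEFinset F k, #(univ.filter f.IsRoot) = Fintype.card F ^ (k + 1) := by
  have := sum_card_bipartiteAbove_eq_sum_card_bipartiteBelow (s := degreeLEFinset F k)
    (t := univ) (r := fun f a => f.IsRoot a)
  simp only [bipartiteAbove, bipartiteBelow] at this
  simp_rw [this, card_filter_isRoot hk, sum_const, card_univ, smul_eq_mul, pow_succ']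

lemma sum_card_offDiag_roots (hk : 2 ≤ k) :
    ∑ f ∈ degreeLEFinset F k, #(univ.filter f.IsRoot).offDiag =
      (Fintype.card F * Fintype.card F - Fintype.card F) * Fintype.card F ^ (k - 1) := by
  have := sum_card_bipartiteAbove_eq_sum_card_bipartiteBelow (s := degreeLEFinset F k)
    (t := (univ : Finset F).offDiag) (r := fun f p => f.IsRoot p.1 ∧ f.IsRoot p.2)
  simp only [bipartiteAbove, bipartiteBelow] at this
  have hoff : ∀ f : F[X], (univ.filter f.IsRoot).offDiag =
      (univ : Finset F).offDiag.filter fun p => f.IsRoot p.1 ∧ f.IsRoot p.2 := by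
    intro f
    ext p
    simp only [mem_offDiag, mem_filter, mem_univ, true_and]
    tauto
  simp_rw [hoff, this]
  rw [sum_congr rfl fun p hp => card_filter_isRoot_and_isRoot hk (mem_offDiag.mp hp).2.2,
    sum_const, offDiag_card, card_univ, smul_eq_mul]

lemma card_add_card_offDiag_le {α : Type*} [Fintype α] {s : Finset α} (hs : s.Nonempty) :
    Fintype.card α + #s.offDiag ≤ Fintype.card α * #s := by
  have h1 : 1 ≤ #s := hs.card_pos
  have h2 : #s ≤ Fintype.card α := card_le_univ s
  have h3 : #s ≤ #s * #s := Nat.le_mul_of_pos_left _ h1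
  rw [offDiag_card]
  zify [h3]
  -- `(#s - 1) * (card α - #s) ≥ 0`
  nlinarith

lemma le_card_filter_forall_not_isRoot (hk : 2 ≤ k) :
    (Fintype.card F - 1) * Fintype.card F ^ (k - 1) ≤
      #((degreeLEFinset F k).filter fun f => ∀ x, ¬ f.IsRoot x) := by
  set q := Fintype.card F
  set P := degreeLEFinset F k
  set R := P.filter fun f => (univ.filter f.IsRoot).Nonempty
  have hq : 0 < q := Fintype.card_pos
  have hpoint : ∀ f ∈ P, q * (if (univ.filter f.IsRoot).Nonempty then 1 else 0) +
      #(univ.filter f.IsRoot).offDiag ≤ q * #(univ.filter f.IsRoot) := by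
    intro f _
    split_ifs with hroot
    · simpa using card_add_card_offDiag_le hroot
    · rw [not_nonempty_iff_eq_empty.mp hroot]
      simp
  have hsum : q * #R + (q * q - q) * q ^ (k - 1) ≤ q * q ^ (k + 1) := by
    have := sum_le_sum hpoint
    rwa [sum_add_distrib, ← mul_sum, ← mul_sum, ← card_filter, sum_card_roots (by omega),
      sum_card_offDiag_roots hk] at this
  have hsplit : #(P.filter fun f => ∀ x, ¬ f.IsRoot x) + #R = q ^ (k + 1) := by
    have hR : R = P.filter fun f => ¬ ∀ x, ¬ f.IsRoot x :=
      filter_congr fun f _ => by simp [filter_nonempty_iff]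
    rw [hR, card_filter_add_card_filter_not, card_degreeLEFinset]
  rw [← hsplit, ← Nat.mul_sub_one] at hsum
  refine Nat.le_of_mul_le_mul_left ?_ hq
  nlinarith

def IsIntersecting (U : Finset F[X]) : Prop :=
  ∀ f ∈ U, ∀ g ∈ U, ∃ x, f.eval x = g.eval x

variable {W : Finset F[X]}

lemma IsIntersecting.exists_add_C_mul_eq (hW : IsIntersecting W)
    (hWdeg : ∀ w ∈ W, w.natDegree ≤ k) (hWcard : #W = Fintype.card F ^ k)
    {h : F[X]} (hh : h.natDegree ≤ k) (hroot : ∀ x, ¬ h.IsRoot x)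
    {f : F[X]} (hf : f.natDegree ≤ k) : ∃ w ∈ W, ∃ c : F, w + C c * h = f := by
  set S := image₂ (fun w (c : F) => w + C c * h) W univ
  have hinj : (W ×ˢ univ : Set (F[X] × F)).InjOn fun p => p.1 + C p.2 * h := by
    rintro ⟨w, c⟩ hw ⟨w', c'⟩ hw' heq
    simp only [Set.mem_prod, mem_coe] at hw hw' heq
    obtain ⟨x, hx⟩ := hW w hw.1 w' hw'.1
    have hc : c = c' := by
      have := congrArg (eval x) heq
      simp only [eval_add, eval_mul, eval_C, hx, add_right_inj] at this
      exact mul_right_cancel₀ (hroot x) this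
    subst hc
    simpa using heq
  have hsub : S ⊆ degreeLEFinset F k := by
    simp only [S, image₂_subset_iff, mem_degreeLEFinset]
    exact fun w hw c _ => natDegree_add_le_of_degree_le (hWdeg w hw)
      (natDegree_C_mul_le c h |>.trans hh)
  have hS : S = degreeLEFinset F k := by
    refine eq_of_subset_of_card_le hsub ?_
    rw [card_degreeLEFinset, card_image₂_iff.mpr hinj, hWcard, card_univ, pow_succ]
  have hfS : f ∈ S := hS ▸ mem_degreeLEFinset.mpr hf
  simpa [S, mem_image₂] using hfS

lemma IsIntersecting.card_filter_forall_not_isRoot_le (hW : IsIntersecting W)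
    (hWdeg : ∀ w ∈ W, w.natDegree ≤ k) (hWcard : #W = Fintype.card F ^ k)
    {f₀ : F[X]} (hf₀ : f₀.natDegree ≤ k) (hf₀W : f₀ ∉ W) :
    #((degreeLEFinset F k).filter fun h => ∀ x, ¬ h.IsRoot x) ≤
      (Fintype.card F - 1) * #(W.filter fun w => ∀ x, w.eval x ≠ f₀.eval x) := by
  set W' := W.filter fun w => ∀ x, w.eval x ≠ f₀.eval x
  have hcover : (degreeLEFinset F k).filter (fun h => ∀ x, ¬ h.IsRoot x) ⊆
      image₂ (fun w c => C c * (w - f₀)) W' (univ.erase 0) := by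
    intro h hh
    rw [mem_filter, mem_degreeLEFinset] at hh
    obtain ⟨w, hw, c, rfl⟩ := hW.exists_add_C_mul_eq hWdeg hWcard hh.1 hh.2 hf₀
    have hc : c ≠ 0 := by
      rintro rfl
      simp_all
    have hwW' : w ∈ W' := mem_filter.mpr ⟨hw, fun x hx => hh.2 x <| by
      simpa [hc] using hx⟩
    refine mem_image₂.mpr ⟨w, hwW', -c⁻¹, by simp [hc], ?_⟩
    rw [sub_add_cancel_left, mul_neg, ← mul_assoc, ← C_mul, neg_mul, inv_mul_cancel₀ hc, C_neg,
      C_1, neg_one_mul, neg_neg]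
  calc _ ≤ #(image₂ (fun w c => C c * (w - f₀)) W' (univ.erase 0)) := card_le_card hcover
    _ ≤ #W' * #(univ.erase (0 : F)) := card_image₂_le _ _ _
    _ = (Fintype.card F - 1) * #W' := by
      rw [card_erase_of_mem (mem_univ _), card_univ, mul_comm]

end

theorem stmt13_general (F : Type*) [Field F] [Fintype F]
    (k : ℕ) (hk : 1 < k)
    (U : Finset (Polynomial F))
    (hU : Fintype.card F ^ k - Fintype.card F ^ (k - 1) < U.card)
    (V W : Finset (Polynomial F))
    (hVdeg : ∀ f ∈ V, f.natDegree ≤ k)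
    (hVint : ∀ f ∈ V, ∀ g ∈ V, ∃ x : F, f.eval x = g.eval x)
    (hVcard : V.card = Fintype.card F ^ k) (hUV : U ⊆ V)
    (hWdeg : ∀ f ∈ W, f.natDegree ≤ k)
    (hWint : ∀ f ∈ W, ∀ g ∈ W, ∃ x : F, f.eval x = g.eval x)
    (hWcard : W.card = Fintype.card F ^ k) (hUW : U ⊆ W) :
    V = W := by
  refine eq_of_subset_of_card_le (fun f₀ hf₀V => ?_) (hWcard.trans hVcard.symm).le
  by_contra hf₀W
  have hq : 1 < Fintype.card F := Fintype.one_lt_card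
  have hfar : W.filter (fun w => ∀ x, w.eval x ≠ f₀.eval x) ⊆ W \ U := by
    intro w hw
    rw [mem_filter] at hw
    refine mem_sdiff.mpr ⟨hw.1, fun hwU => ?_⟩
    obtain ⟨x, hx⟩ := hVint w (hUV hwU) f₀ hf₀V
    exact hw.2 x hx
  have hsmall : #(W \ U) < Fintype.card F ^ (k - 1) := by
    have hUcard : #U ≤ Fintype.card F ^ k := hWcard ▸ card_le_card hUW
    rw [card_sdiff_of_subset hUW, hWcard]
    omega
  have hcount := (le_card_filter_forall_not_isRoot hk).trans
    (IsIntersecting.card_filter_forall_not_isRoot_le hWint hWdeg hWcard (hVdeg f₀ hf₀V) hf₀W)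
  exact (Nat.le_of_mul_le_mul_left hcount (by omega)).not_gt
    ((card_le_card hfar).trans_lt hsmall)

/-- If `U` is an intersecting family of more than `q^k − q^{k−1}` polynomials over `F_q`
(`q > 9` if `q` odd, `q > 2` if `q` even) of degree at most `k`, `k > 1`, then `U` extends
uniquely to an intersecting family of `q^k` polynomials of degree at most `k`: any two such
extensions coincide. -/
theorem stmt13 (F : Type*) [Field F] [Fintype F]
    (hodd : Odd (Fintype.card F) → 9 < Fintype.card F)
    (heven : Even (Fintype.card F) → 2 < Fintype.card F)
    (k : ℕ) (hk : 1 < k)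
    (U : Finset (Polynomial F)) (hdeg : ∀ f ∈ U, f.natDegree ≤ k)
    (hint : ∀ f ∈ U, ∀ g ∈ U, ∃ x : F, f.eval x = g.eval x)
    (hU : Fintype.card F ^ k - Fintype.card F ^ (k - 1) < U.card)
    (V W : Finset (Polynomial F))
    (hVdeg : ∀ f ∈ V, f.natDegree ≤ k)
    (hVint : ∀ f ∈ V, ∀ g ∈ V, ∃ x : F, f.eval x = g.eval x)
    (hVcard : V.card = Fintype.card F ^ k) (hUV : U ⊆ V)
    (hWdeg : ∀ f ∈ W, f.natDegree ≤ k)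
    (hWint : ∀ f ∈ W, ∀ g ∈ W, ∃ x : F, f.eval x = g.eval x)
    (hWcard : W.card = Fintype.card F ^ k) (hUW : U ⊆ W) :
    V = W :=
  stmt13_general F k hk U hU V W hVdeg hVint hVcard hUV hWdeg hWint hWcard hUW
end

section
/- For every prime power q > 2 there exists an intersecting family U of polynomials over F_q of degree at most 2 with |U| = (q^2 + q)/2 such that there exist no s, t ∈ F_q with f(s) = t for every f ∈ U; that is, the graphs of the members of U have no common point. (Concretely, taking the point P = (0,1) and the line e(x) = 0, the family U consisting of e together with all polynomials h of degree at most 2 satisfying h(0) = 1 and having a root in F_q is such a family.) -/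
/-!
The family is `0` together with the polynomials `(1 - r X)(1 - s X)` for `s(r, s) ≠ s(0, 0)`,
i.e. the polynomials of degree at most 2 with value `1` at `0` that have a root. Any two of them
meet at `(0, 1)`, and each meets `0` at one of its roots. By Vieta they are distinct for distinct
unordered pairs, so there are `q (q + 1) / 2 - 1` of them. A common point `(x, t)` would need
`t = 0` because of the member `0`, but `1 - r X` with `r ∉ {0, x⁻¹}` (which exists as `q > 2`)
does not vanish at `x`.
-/

open Polynomial Finset

theorem Sym2.mk_eq_mk_of_add_eq_of_mul_eq {R : Type*} [CommRing R] [NoZeroDivisors R]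
    {a b c d : R} (hadd : a + b = c + d) (hmul : a * b = c * d) : s(a, b) = s(c, d) := by
  have h : (a - c) * (a - d) = 0 := by linear_combination a * hadd - hmul
  rcases mul_eq_zero.1 h with h | h
  · obtain rfl := sub_eq_zero.1 h
    obtain rfl : b = d := by linear_combination hadd
    rfl
  · obtain rfl := sub_eq_zero.1 h
    obtain rfl : b = c := by linear_combination hadd
    exact Sym2.eq_swap

section InvRootsQuadratic

variable {R : Type*} [CommRing R]

noncomputable def invRootsQuadratic : Sym2 R → R[X] :=
  Sym2.lift ⟨fun r s => (1 - C r * X) * (1 - C s * X), fun _ _ => mul_comm _ _⟩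

@[simp]
theorem invRootsQuadratic_mk (r s : R) :
    invRootsQuadratic s(r, s) = (1 - C r * X) * (1 - C s * X) := rfl

theorem eval_zero_invRootsQuadratic (z : Sym2 R) : (invRootsQuadratic z).eval 0 = 1 := by
  induction z using Sym2.ind with
  | h r s => simp

theorem natDegree_invRootsQuadratic_le (z : Sym2 R) : (invRootsQuadratic z).natDegree ≤ 2 := by
  induction z using Sym2.ind with
  | h r s => rw [invRootsQuadratic_mk]; compute_degree

theorem invRootsQuadratic_mk_eq (r s : R) :
    invRootsQuadratic s(r, s) = C (r * s) * X ^ 2 - C (r + s) * X + 1 := by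
  simp only [invRootsQuadratic_mk, C_mul, C_add]; ring

theorem invRootsQuadratic_injective [NoZeroDivisors R] :
    Function.Injective (invRootsQuadratic (R := R)) := by
  intro z w h
  induction z using Sym2.ind with | h a b => ?_
  induction w using Sym2.ind with | h c d => ?_
  rw [invRootsQuadratic_mk_eq, invRootsQuadratic_mk_eq] at h
  have hadd := congrArg (coeff · 1) h
  have hmul := congrArg (coeff · 2) h
  simp only [coeff_add, coeff_sub, coeff_C_mul_X_pow, coeff_C_mul_X, coeff_one] at hadd hmul
  norm_num at hadd hmul
  exact Sym2.mk_eq_mk_of_add_eq_of_mul_eq (by linear_combination -hadd) hmul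

end InvRootsQuadratic

theorem exists_eval_invRootsQuadratic_eq_zero {F : Type*} [Field F] {z : Sym2 F}
    (hz : z ≠ s(0, 0)) : ∃ x, (invRootsQuadratic z).eval x = 0 := by
  induction z using Sym2.ind with | h r s => ?_
  by_cases hr : r = 0
  · subst hr
    have hs : s ≠ 0 := by rintro rfl; exact hz rfl
    exact ⟨s⁻¹, by simp [hs]⟩
  · exact ⟨r⁻¹, by simp [hr]⟩

theorem exists_eval_invRootsQuadratic_ne_zero {F : Type*} [Field F] [Fintype F]
    (hq : 2 < Fintype.card F) (x : F) :
    ∃ z ≠ s(0, 0), (invRootsQuadratic z).eval x ≠ 0 := by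
  classical
  have hcard : ({0, x⁻¹} : Finset F).card < (univ : Finset F).card :=
    card_le_two.trans_lt hq
  obtain ⟨r, -, hr⟩ := exists_mem_notMem_of_card_lt_card hcard
  simp only [mem_insert, mem_singleton, not_or] at hr
  refine ⟨s(r, 0), by simpa using hr.1, ?_⟩
  rcases eq_or_ne x 0 with rfl | hx
  · simp
  · have : r * x ≠ 1 := fun h => hr.2 (eq_inv_of_mul_eq_one_left h)
    simpa [sub_eq_zero, eq_comm (a := (1 : F))] using this

theorem Sym2.two_mul_card (α : Type*) [Fintype α] :
    2 * Fintype.card (Sym2 α) = Fintype.card α ^ 2 + Fintype.card α := by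
  rw [Sym2.card, Nat.choose_two_right, Nat.mul_div_cancel' (Nat.even_mul_pred_self _).two_dvd]
  simp only [add_tsub_cancel_right]
  ring

/-- (Hilton–Milner type example.) For every prime power `q > 2` there is an intersecting
family `U` of polynomials over `F_q` of degree at most `2` with `|U| = (q² + q)/2` whose
graphs have no common point. -/
theorem stmt18 (F : Type*) [Field F] [Fintype F] (hq : 2 < Fintype.card F) :
    ∃ U : Finset (Polynomial F),
      (∀ f ∈ U, f.natDegree ≤ 2) ∧
      (∀ f ∈ U, ∀ g ∈ U, ∃ x : F, f.eval x = g.eval x) ∧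
      2 * U.card = Fintype.card F ^ 2 + Fintype.card F ∧
      ¬ ∃ s t : F, ∀ f ∈ U, f.eval s = t := by
  classical
  set V := (univ.erase s(0, 0)).image (invRootsQuadratic (R := F))
  have hmem : ∀ f, f ∈ insert 0 V ↔ f = 0 ∨ ∃ z ≠ s(0, 0), invRootsQuadratic z = f := by
    simp [V]
  have hzero : (0 : F[X]) ∉ V := fun h => by
    obtain ⟨z, -, hz⟩ := mem_image.1 h
    simpa [hz] using eval_zero_invRootsQuadratic z
  refine ⟨insert 0 V, ?_, ?_, ?_, ?_⟩
  · intro f hf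
    obtain rfl | ⟨z, -, rfl⟩ := (hmem f).1 hf
    exacts [by simp, natDegree_invRootsQuadratic_le z]
  · intro f hf g hg
    obtain rfl | ⟨z, hz, rfl⟩ := (hmem f).1 hf <;> obtain rfl | ⟨w, hw, rfl⟩ := (hmem g).1 hg
    · exact ⟨0, rfl⟩
    · obtain ⟨x, hx⟩ := exists_eval_invRootsQuadratic_eq_zero hw
      exact ⟨x, by rw [hx, eval_zero]⟩
    · obtain ⟨x, hx⟩ := exists_eval_invRootsQuadratic_eq_zero hz
      exact ⟨x, by rw [hx, eval_zero]⟩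
    · exact ⟨0, by rw [eval_zero_invRootsQuadratic, eval_zero_invRootsQuadratic]⟩
  · have hpos : 0 < Fintype.card (Sym2 F) := Fintype.card_pos
    rw [card_insert_of_notMem hzero, card_image_of_injective _ invRootsQuadratic_injective,
      card_erase_of_mem (mem_univ _), card_univ, ← Sym2.two_mul_card]
    omega
  · rintro ⟨x, t, hxt⟩
    obtain rfl : 0 = t := by simpa using hxt 0 (mem_insert_self _ _)
    obtain ⟨z, hz, hne⟩ := exists_eval_invRootsQuadratic_ne_zero hq x
    exact hne (hxt _ ((hmem _).2 (Or.inr ⟨z, hz, rfl⟩)))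
end

section
/- Let q be an odd prime power. Then there exists an intersecting family M of polynomials over F_q of degree at most 2 with |M| = (q^2 − q)/2 + 1, i.e., |M| = (q^2 − q + 2)/2, consisting of a polynomial f together with the set P = { a·x^2 + b·x + C − (B−b)^2/(4(A−a)) : A − a is a nonzero square in F_q, b ∈ F_q }, where f(x) = A·x^2 + B·x + C; moreover |U_f ∩ U_g| = 1 for every g ∈ M with g ≠ f. -/
open Polynomial Finset

private lemma coeffs2a {F : Type*} [Field F] (a b c : F) :
    (C a * X ^ 2 + C b * X + C c).coeff 2 = a := by
  simp [coeff_add, coeff_C_mul, coeff_X_pow, coeff_C]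

private lemma coeffs2b {F : Type*} [Field F] (a b c : F) :
    (C a * X ^ 2 + C b * X + C c).coeff 1 = b := by
  simp [coeff_add, coeff_C_mul, coeff_X_pow, coeff_C]

private lemma eval2 {F : Type*} [Field F] (a b c x : F) :
    Polynomial.eval x (C a * X ^ 2 + C b * X + C c) = a * x ^ 2 + b * x + c := by
  simp

/-- Let `q` be odd. There is an intersecting family `M` of polynomials over `F_q` of degree
at most `2` with `|M| = (q² − q)/2 + 1 = (q² − q + 2)/2`, consisting of a polynomial
`f = A x² + B x + C₀` together with the set
`P = {a x² + b x + (C₀ − (B−b)²/(4(A−a))) : A − a a nonzero square, b ∈ F_q}`;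
moreover the graphs `U_f` and `U_g` meet in exactly one point for every `g ∈ M`, `g ≠ f`. -/
theorem stmt19 (F : Type*) [Field F] [Fintype F] (hodd : Odd (Fintype.card F)) :
    ∃ (A B C₀ : F) (M : Set (Polynomial F)),
      M = insert (C A * X ^ 2 + C B * X + C C₀)
        {g : Polynomial F | ∃ a b : F, (∃ w : F, w ≠ 0 ∧ A - a = w ^ 2) ∧
          g = C a * X ^ 2 + C b * X + C (C₀ - (B - b) ^ 2 / (4 * (A - a)))} ∧
      (∀ g ∈ M, Polynomial.natDegree g ≤ 2) ∧
      (∀ g₁ ∈ M, ∀ g₂ ∈ M, ∃ x : F, Polynomial.eval x g₁ = Polynomial.eval x g₂) ∧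
      2 * M.ncard = Fintype.card F ^ 2 - Fintype.card F + 2 ∧
      ∀ g ∈ M, g ≠ C A * X ^ 2 + C B * X + C C₀ →
        {x : F | Polynomial.eval x (C A * X ^ 2 + C B * X + C C₀) =
          Polynomial.eval x g}.ncard = 1 := by
  classical
  set q := Fintype.card F with hq
  -- characteristic is not two
  have h2 : (2 : F) ≠ 0 := by
    intro h
    have hd : ringChar F ∣ 2 := by
      apply ringChar.dvd
      exact_mod_cast h
    have hp : (ringChar F).Prime := CharP.char_is_prime F (ringChar F)
    have hc2 : ringChar F = 2 := (Nat.prime_dvd_prime_iff_eq hp Nat.prime_two).mp hd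
    have := FiniteField.even_card_of_char_two hc2
    obtain ⟨k, hk⟩ := hodd
    omega
  have h4 : (4 : F) ≠ 0 := by
    intro h
    apply h2
    have : (4 : F) = 2 * 2 := by norm_num
    rw [this] at h
    rcases mul_eq_zero.mp h with h | h <;> exact h
  -- the zero polynomial, written in the required shape
  set f : Polynomial F := C (0:F) * X ^ 2 + C (0:F) * X + C (0:F) with hf
  set P : Set (Polynomial F) :=
    {g : Polynomial F | ∃ a b : F, (∃ w : F, w ≠ 0 ∧ (0:F) - a = w ^ 2) ∧
      g = C a * X ^ 2 + C b * X + C ((0:F) - ((0:F) - b) ^ 2 / (4 * ((0:F) - a)))} with hP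
  -- canonical form of members of P
  have hmem : ∀ g, g ∈ P ↔ ∃ w t : F, w ≠ 0 ∧
      g = C (-w ^ 2) * X ^ 2 + C (2 * w * t) * X + C (-t ^ 2) := by
    intro g
    constructor
    · rintro ⟨a, b, ⟨w, hw, hsq⟩, rfl⟩
      refine ⟨w, b / (2 * w), hw, ?_⟩
      have ha : a = -w ^ 2 := by linear_combination -hsq
      have h2w : (2 : F) * w ≠ 0 := mul_ne_zero h2 hw
      have hb : 2 * w * (b / (2 * w)) = b := by rw [mul_comm, div_mul_cancel₀ _ h2w]
      have hc : (0:F) - ((0:F) - b) ^ 2 / (4 * ((0:F) - -w ^ 2)) = -(b / (2 * w)) ^ 2 := by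
        have hd : ((0:F) - b) ^ 2 / (4 * ((0:F) - -w ^ 2)) = (b / (2 * w)) ^ 2 := by
          rw [div_pow]; congr 1 <;> ring
        rw [hd]; ring
      rw [ha, hc, hb]
    · rintro ⟨w, t, hw, rfl⟩
      refine ⟨-w ^ 2, 2 * w * t, ⟨w, hw, by ring⟩, ?_⟩
      have hw2 : w ^ 2 ≠ 0 := pow_ne_zero 2 hw
      have hc : (0:F) - ((0:F) - 2 * w * t) ^ 2 / (4 * ((0:F) - -w ^ 2)) = -t ^ 2 := by
        have hd : ((0:F) - 2 * w * t) ^ 2 / (4 * ((0:F) - -w ^ 2)) = (2 * w) ^ 2 * t ^ 2 / (2 * w) ^ 2 := by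
          congr 1 <;> ring
        rw [hd, mul_comm ((2*w)^2) (t^2), mul_div_assoc, div_self (pow_ne_zero 2 (mul_ne_zero h2 hw)), mul_one]; ring
      rw [hc]
  refine ⟨0, 0, 0, insert f P, rfl, ?_, ?_, ?_, ?_⟩
  · -- degrees
    rintro g (rfl | hg)
    · rw [hf]; compute_degree
    · obtain ⟨w, t, hw, rfl⟩ := (hmem g).mp hg
      compute_degree
  · -- intersecting
    have hevalf : ∀ x : F, Polynomial.eval x f = 0 := by intro x; simp [hf]
    have heval : ∀ w t x : F, Polynomial.eval x
        (C (-w ^ 2) * X ^ 2 + C (2 * w * t) * X + C (-t ^ 2)) = -(w * x - t) ^ 2 := by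
      intro w t x; rw [eval2]; ring
    rintro g₁ (rfl | hg₁) g₂ (rfl | hg₂)
    · exact ⟨0, rfl⟩
    · obtain ⟨w, t, hw, rfl⟩ := (hmem g₂).mp hg₂
      refine ⟨t / w, ?_⟩
      rw [hevalf, heval]
      field_simp
      ring
    · obtain ⟨w, t, hw, rfl⟩ := (hmem g₁).mp hg₁
      refine ⟨t / w, ?_⟩
      rw [hevalf, heval]
      field_simp
      ring
    · obtain ⟨w₁, t₁, hw₁, rfl⟩ := (hmem g₁).mp hg₁
      obtain ⟨w₂, t₂, hw₂, rfl⟩ := (hmem g₂).mp hg₂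
      by_cases hww : w₁ = w₂
      · refine ⟨(t₁ + t₂) / (2 * w₁), ?_⟩
        rw [heval, heval, ← hww]
        have h2w : (2 : F) * w₁ ≠ 0 := mul_ne_zero h2 hw₁
        field_simp
        ring
      · refine ⟨(t₁ - t₂) / (w₁ - w₂), ?_⟩
        rw [heval, heval]
        have hsub : w₁ - w₂ ≠ 0 := sub_ne_zero.mpr hww
        have : w₁ * ((t₁ - t₂) / (w₁ - w₂)) - t₁ = w₂ * ((t₁ - t₂) / (w₁ - w₂)) - t₂ := by
          field_simp
          ring
        rw [this]
  · -- cardinality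
    set T : Finset F := Finset.univ.filter (· ≠ (0:F)) with hT
    set S : Finset F := T.image (fun w => -w ^ 2) with hS
    set D : Finset (F × F) := S ×ˢ Finset.univ with hD
    set φ : F × F → Polynomial F := fun ab =>
      C ab.1 * X ^ 2 + C ab.2 * X + C ((0:F) - ((0:F) - ab.2) ^ 2 / (4 * ((0:F) - ab.1))) with hφ
    have hφinj : Function.Injective φ := by
      intro ab₁ ab₂ h
      have h2c := congrArg (fun p => Polynomial.coeff p 2) h
      have h1c := congrArg (fun p => Polynomial.coeff p 1) h
      simp only [hφ, coeffs2a, coeffs2b] at h2c h1c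
      exact Prod.ext h2c h1c
    have hPD : P = ↑(D.image φ) := by
      ext g
      simp only [hP, Finset.coe_image, Set.mem_image, Finset.mem_coe, hD, Finset.mem_product,
        hS, Finset.mem_image, hT, Finset.mem_filter, Finset.mem_univ, true_and, and_true,
        Set.mem_setOf_eq, hφ]
      constructor
      · rintro ⟨a, b, ⟨w, hw, hsq⟩, rfl⟩
        exact ⟨(a, b), ⟨w, hw, by linear_combination hsq⟩, rfl⟩
      · rintro ⟨⟨a, b⟩, ⟨w, hw, ha⟩, rfl⟩
        exact ⟨a, b, ⟨w, hw, by linear_combination ha⟩, rfl⟩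
    have hfP : f ∉ D.image φ := by
      intro hmem'
      obtain ⟨ab, habD, hab⟩ := Finset.mem_image.mp hmem'
      have := congrArg (fun p => Polynomial.coeff p 2) hab
      simp only [hφ, hf, coeffs2a] at this
      obtain ⟨w, hwT, ha⟩ := Finset.mem_image.mp (Finset.mem_product.mp habD).1
      have hw : w ≠ 0 := by simpa using (Finset.mem_filter.mp hwT).2
      rw [← ha] at this
      exact hw (by
        have : w ^ 2 = 0 := by linear_combination -this
        exact pow_eq_zero_iff (n := 2) (by norm_num) |>.mp this)
    have hM : (insert f P : Set (Polynomial F)) = ↑(insert f (D.image φ)) := by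
      rw [hPD]; simp
    rw [hM, Set.ncard_coe_finset, Finset.card_insert_of_notMem hfP,
      Finset.card_image_of_injective _ hφinj, hD, Finset.card_product, Finset.card_univ, ← hq]
    -- now count S
    have hTcard : T.card = q - 1 := by
      have : T = ({(0:F)} : Finset F)ᶜ := by
        ext x; simp [hT]
      rw [this, Finset.card_compl, Finset.card_singleton, ← hq]
    have hST : T.card = 2 * S.card := by
      rw [Finset.card_eq_sum_card_image (fun w => -w ^ 2) T, ← hS]
      rw [Finset.sum_congr rfl (fun b hb => ?_), Finset.sum_const, smul_eq_mul, mul_comm]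
      obtain ⟨w₀, hw₀T, hw₀⟩ := Finset.mem_image.mp hb
      have hw₀ne : w₀ ≠ 0 := by simpa [hT] using hw₀T
      have : T.filter (fun w => -w ^ 2 = b) = {w₀, -w₀} := by
        ext w
        simp only [Finset.mem_filter, hT, Finset.mem_univ, true_and, Finset.mem_insert,
          Finset.mem_singleton]
        constructor
        · rintro ⟨hw, hwb⟩
          have hsq : (w - w₀) * (w + w₀) = 0 := by linear_combination hw₀ - hwb
          rcases mul_eq_zero.mp hsq with h | h
          · left; linear_combination h
          · right; linear_combination h
        · rintro (rfl | rfl)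
          · exact ⟨hw₀ne, hw₀⟩
          · refine ⟨fun h => hw₀ne (by linear_combination -h), by linear_combination hw₀⟩
      rw [this, Finset.card_insert_of_notMem, Finset.card_singleton]
      simp only [Finset.mem_singleton]
      intro h
      apply hw₀ne
      have : (2 : F) * w₀ = 0 := by linear_combination h
      rcases mul_eq_zero.mp this with h' | h'
      · exact absurd h' h2
      · exact h'
    have hq1 : 1 ≤ q := Fintype.card_pos
    obtain ⟨k, hk⟩ : ∃ k, q = k + 1 := ⟨q - 1, by omega⟩
    have hScard : 2 * S.card = k := by omega
    have : 2 * (S.card * q + 1) = 2 * S.card * q + 2 := by ring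
    rw [this, hScard, hk]
    have h1 : k * (k + 1) = (k + 1) ^ 2 - (k + 1) := by
      have : (k + 1) ^ 2 = k * (k + 1) + (k + 1) := by ring
      omega
    omega
  · -- unique intersection
    intro g hg hne
    have hgP : g ∈ P := by
      rcases hg with rfl | hgP
      · exact absurd rfl hne
      · exact hgP
    obtain ⟨w, t, hw, rfl⟩ := (hmem g).mp hgP
    have : {x : F | Polynomial.eval x f =
        Polynomial.eval x (C (-w ^ 2) * X ^ 2 + C (2 * w * t) * X + C (-t ^ 2))} = {t / w} := by
      ext x
      simp only [Set.mem_setOf_eq, Set.mem_singleton_iff, hf, eval2]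
      constructor
      · intro h
        have hsq : (w * x - t) ^ 2 = 0 := by linear_combination h
        have := pow_eq_zero_iff (n := 2) (by norm_num) |>.mp hsq
        field_simp
        linear_combination this
      · rintro rfl
        field_simp
        ring
    rw [this, Set.ncard_singleton]
end
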